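/- arXiv:0807.2714 — 6 statements merged into one kernel-verified Lean document; each statement's English description precedes it below -/
import Mathlib

section
/- Let A be the Laurent polynomial ring over ℂ in N ≥ 1 variables. Let v ∈ ℤ^N be a nonzero exponent vector, X^v the corresponding Laurent monomial, and ω₀ ∈ ℂ a root of unity. Then every irreducible factor of X^v − ω₀ in A is of the form u·(X^w − ω), where u is a unit of A, w ∈ ℤ^N is nonzero, and ω ∈ ℂ is a root of unity. -/
open scoped Classical

namespace CCnDAHA

variable {n : ℕ}




/-- Laurent polynomial ring in N variables over K. -/
abbrev LaurentMv (K : Type*) [CommRing K] (N : ℕ) : Type _ := AddMonoidAlgebra K (Fin N →₀ ℤ)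

/-- evaluation of a Laurent polynomial at a point z. -/
noncomputable def evalAt {K : Type*} [Field K] (z : Fin n → K) (f : LaurentMv K n) : K :=
  Finsupp.sum f.coeff (fun v c => c * ∏ i, z i ^ (v i))

/-- cyclic successor in Fin k1. -/
def finSucc {k1 : ℕ} (m : Fin k1) : Fin k1 :=
  ⟨((m : ℕ) + 1) % k1, Nat.mod_lt _ (by have := m.isLt; omega)⟩

/-- A wheel of type (k1, r1) in z, with parameters t, q. -/
def IsWheel {K : Type*} [Field K] (k1 r1 : ℕ) (t q : K) (z : Fin n → Kˣ)
    (idx : Fin k1 → Fin n) (sg : Fin k1 → ℤ) (p : Fin k1 → ℕ) : Prop :=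
  Function.Injective idx ∧
  (∀ m, sg m = 1 ∨ sg m = -1) ∧
  (∑ m, p m) = r1 ∧
  (∀ m : Fin k1, ((z (idx m) : K) ^ (sg m)) * t * q ^ (p m)
      = (z (idx (finSucc m)) : K) ^ (sg (finSucc m))) ∧
  (∀ m : Fin k1, p m = 0 →
    (sg m = 1 ∧ sg (finSucc m) = 1 ∧ idx m < idx (finSucc m)) ∨
    (sg m = 1 ∧ sg (finSucc m) = -1) ∨
    (sg m = -1 ∧ sg (finSucc m) = -1 ∧ idx (finSucc m) < idx m))

/-- z admits mw wheels of type (k1,r1) with pairwise disjoint index sets. -/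
def HasWheels {K : Type*} [Field K] (k1 r1 : ℕ) (t q : K) (mw : ℕ) (z : Fin n → Kˣ) : Prop :=
  ∃ (idx : Fin mw → Fin k1 → Fin n) (sg : Fin mw → Fin k1 → ℤ) (p : Fin mw → Fin k1 → ℕ),
    (∀ a, IsWheel k1 r1 t q z (idx a) (sg a) (p a)) ∧
    (∀ a b, a ≠ b → ∀ m m', idx a m ≠ idx b m')

/-- the mw-wheel condition of type (k1, r1). -/
def SatisfiesWheel {K : Type*} [Field K] (k1 r1 : ℕ) (t q : K) (mw : ℕ)
    (f : LaurentMv K n) : Prop :=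
  ∀ z : Fin n → Kˣ, HasWheels k1 r1 t q mw z → evalAt (fun i => (z i : K)) f = 0

/-- The six-variable Laurent polynomial ring A (variables Q,T,T_n,T_0,U_n,U_0 = 0,…,5). -/
abbrev A6 : Type := AddMonoidAlgebra ℂ (Fin 6 →₀ ℤ)

/-- image of x ∈ A in the fraction field K_s of A/(s). -/
noncomputable def bar (s : A6) (x : A6) : FractionRing (A6 ⧸ Ideal.span {s}) :=
  algebraMap (A6 ⧸ Ideal.span {s}) (FractionRing (A6 ⧸ Ideal.span {s}))
    (Ideal.Quotient.mk (Ideal.span {s}) x)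

/-- the permutation action s_i f (1 ≤ i ≤ n−1), swapping the variables x_i, x_j. -/
noncomputable def sSwap {K : Type*} [CommRing K] (i j : Fin n) (f : LaurentMv K n) :
    LaurentMv K n :=
  Finsupp.sum f.coeff (fun v c =>
    AddMonoidAlgebra.single (Finsupp.equivMapDomain (Equiv.swap i j) v) c)

/-- the action s_n f : x_i ↦ x_i⁻¹. -/
noncomputable def sNeg {K : Type*} [CommRing K] (i : Fin n) (f : LaurentMv K n) :
    LaurentMv K n :=
  Finsupp.sum f.coeff (fun v c => AddMonoidAlgebra.single (Finsupp.update v i (-(v i))) c)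

/-- the action s_0 f : x_i ↦ q·x_i⁻¹. -/
noncomputable def sNegQ {K : Type*} [Field K] (q : K) (i : Fin n) (f : LaurentMv K n) :
    LaurentMv K n :=
  Finsupp.sum f.coeff (fun v c =>
    AddMonoidAlgebra.single (Finsupp.update v i (-(v i))) (c * q ^ (v i)))

/-- defining relation of the Noumi operator T̂_i (1 ≤ i ≤ n−1), for the adjacent pair (i,j):
(1 − x_i x_j^{−1})(g − t^{1/2} f) = t^{−1/2}(1 − t x_i x_j^{−1})(s_i f − f). -/
def RelMid {K : Type*} [Field K] (th : K) (i j : Fin n) (f g : LaurentMv K n) : Prop :=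
  (AddMonoidAlgebra.single 0 1
      - AddMonoidAlgebra.single (Finsupp.single i 1 + Finsupp.single j (-1)) (1 : K))
      * (g - th • f)
    = th⁻¹ • ((AddMonoidAlgebra.single 0 1
      - AddMonoidAlgebra.single (Finsupp.single i 1 + Finsupp.single j (-1)) (th ^ 2))
      * (sSwap i j f - f))

/-- defining relation of T̂_n (i is the last variable):
(1 − x_i²)(g − t_n^{1/2} f) = t_n^{−1/2}(1 − a x_i)(1 − b x_i)(s_n f − f). -/
def RelLast {K : Type*} [Field K] (tnh a b : K) (i : Fin n) (f g : LaurentMv K n) : Prop :=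
  (AddMonoidAlgebra.single 0 1 - AddMonoidAlgebra.single (Finsupp.single i 2) (1 : K))
      * (g - tnh • f)
    = tnh⁻¹ • (((AddMonoidAlgebra.single 0 1 - AddMonoidAlgebra.single (Finsupp.single i 1) a)
        * (AddMonoidAlgebra.single 0 1 - AddMonoidAlgebra.single (Finsupp.single i 1) b))
      * (sNeg i f - f))

/-- defining relation of T̂_0 (i is the first variable):
(1 − q x_i^{−2})(g − t_0^{1/2} f) = t_0^{−1/2}(1 − c x_i^{−1})(1 − d x_i^{−1})(s_0 f − f). -/
def RelZero {K : Type*} [Field K] (t0h q c d : K) (i : Fin n) (f g : LaurentMv K n) : Prop :=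
  (AddMonoidAlgebra.single 0 1 - AddMonoidAlgebra.single (Finsupp.single i (-2)) q)
      * (g - t0h • f)
    = t0h⁻¹ • (((AddMonoidAlgebra.single 0 1 - AddMonoidAlgebra.single (Finsupp.single i (-1)) c)
        * (AddMonoidAlgebra.single 0 1 - AddMonoidAlgebra.single (Finsupp.single i (-1)) d))
      * (sNegQ q i f - f))

end CCnDAHA

/-!
Choose a basis `b` of `ℤ^N` in which `v = d • b i` with `d > 0` (Smith normal form for the
line `ℤ v`). Over `ℂ`, `X^v - ω₀ = (X^{b i})^d - ω₀` is the product of the factors `X^{b i} - r`,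
`r` running over the `d`-th roots of `ω₀`, and these `r` are roots of unity. Each factor is
prime: the change of basis turns it into `x_i - r`, which generates the kernel of the
substitution `x_i ↦ r` into the domain `A`. An irreducible divisor of a product of primes is
associated to one of them.
-/

open AddMonoidAlgebra Polynomial

theorem Irreducible.exists_associated_mem_of_dvd_prod {M₀ : Type*} [CommMonoidWithZero M₀]
    [IsCancelMulZero M₀] {p : M₀} (hp : Irreducible p) {s : Multiset M₀}
    (hs : ∀ q ∈ s, Prime q) (hps : p ∣ s.prod) : ∃ q ∈ s, Associated p q := by
  induction s using Multiset.induction_on with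
  | empty => exact absurd (isUnit_of_dvd_one (by simpa using hps)) hp.not_isUnit
  | cons a s ih =>
    have ha := hs a (Multiset.mem_cons_self a s)
    obtain ⟨c, hc⟩ := hps
    rw [Multiset.prod_cons] at hc
    rcases ha.dvd_or_dvd ⟨s.prod, hc.symm⟩ with hap | ⟨c', rfl⟩
    · exact ⟨a, Multiset.mem_cons_self a s, (ha.irreducible.associated_of_dvd hp hap).symm⟩
    · have hs' : s.prod = p * c' := mul_left_cancel₀ ha.ne_zero (by rw [hc, mul_left_comm])
      obtain ⟨q, hq, hpq⟩ := ih (fun q hq => hs q (Multiset.mem_cons_of_mem hq)) ⟨c', hs'⟩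
      exact ⟨q, Multiset.mem_cons_of_mem hq, hpq⟩

theorem exists_basis_eq_nsmul {ι M : Type*} [Finite ι] [AddCommGroup M]
    (b₀ : Module.Basis ι ℤ M) {v : M} (hv : v ≠ 0) :
    ∃ (b : Module.Basis ι ℤ M) (i : ι) (d : ℕ), v = d • b i := by
  obtain ⟨n, snf⟩ := Submodule.smithNormalForm b₀ (Submodule.span ℤ {v})
  obtain rfl : n = 1 := by
    have : Module.IsTorsionFree ℤ M := b₀.isTorsionFree
    have := finrank_span_eq_card
      (linearIndependent_unique_iff.mpr hv : LinearIndependent ℤ fun _ : Unit => v)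
    rwa [Set.range_const, Module.finrank_eq_card_basis snf.bN, Fintype.card_fin,
      Fintype.card_unit] at this
  have hv_mem : v ∈ Submodule.span ℤ {v} := Submodule.mem_span_singleton_self v
  have hz : v = (snf.bN.repr ⟨v, hv_mem⟩ 0 * snf.a 0) • snf.bM (snf.f 0) := by
    have hsum := congrArg Subtype.val (snf.bN.sum_repr ⟨v, hv_mem⟩)
    rw [Fin.sum_univ_one, Submodule.coe_smul, snf.snf 0, smul_smul] at hsum
    exact hsum.symm
  obtain ⟨d, hd | hd⟩ := Int.eq_nat_or_neg (snf.bN.repr ⟨v, hv_mem⟩ 0 * snf.a 0)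
  · exact ⟨snf.bM, snf.f 0, d, hz.trans (by rw [hd, natCast_zsmul])⟩
  · exact ⟨snf.bM.map (LinearEquiv.neg ℤ), snf.f 0, d, hz.trans (by simp [hd])⟩

theorem pow_sub_algebraMap_eq_prod_nthRoots {k A : Type*} [Field k] [IsAlgClosed k]
    [CommRing A] [Algebra k A] (x : A) {d : ℕ} (hd : d ≠ 0) (c : k) :
    x ^ d - algebraMap k A c = ((nthRoots d c).map fun r => x - algebraMap k A r).prod := by
  simpa [map_multiset_prod, Multiset.map_map, nthRoots] using congrArg (aeval x)
    ((IsAlgClosed.splits (X ^ d - C c)).eq_prod_roots_of_monic (monic_X_pow_sub_C c hd))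

namespace AddMonoidAlgebra

section Monomials

variable {k G : Type*} [Field k] [AddCommGroup G]

theorem isUnit_single_one (g : G) : IsUnit (single g 1 : AddMonoidAlgebra k G) :=
  IsUnit.of_mul_eq_one (single (-g) 1) (by simp [single_mul_single, ← one_def])

theorem single_sub_single_dvd_single_zsmul_sub_single_zpow (g : G) {r : k} (hr : r ≠ 0)
    (n : ℤ) : (single g 1 - single 0 r : AddMonoidAlgebra k G) ∣
      single (n • g) 1 - single 0 (r ^ n) := by
  -- `single g 1` is a unit, so this identity carries divisibility both up and down in `n`.
  have hsucc : ∀ n : ℤ, (single ((n + 1) • g) 1 - single 0 (r ^ (n + 1)) : AddMonoidAlgebra k G)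
      = single g 1 * (single (n • g) 1 - single 0 (r ^ n))
        + single 0 (r ^ n) * (single g 1 - single 0 r) := by
    intro n
    simp only [mul_sub, single_mul_single, add_smul, one_smul, zpow_add_one₀ hr, one_mul,
      mul_one, zero_add, add_zero, add_comm g]
    abel
  induction n using Int.induction_on with
  | zero => simp
  | succ n ih => rw [hsucc]; exact dvd_add (dvd_mul_of_dvd_right ih _) (dvd_mul_left _ _)
  | pred n ih =>
    rw [← sub_add_cancel (-(n : ℤ)) 1, hsucc] at ih
    exact (isUnit_single_one g).dvd_mul_left.mp ((dvd_add_left (dvd_mul_left _ _)).mp ih)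

end Monomials

section Specialization

variable {k ι : Type*} [Field k]

noncomputable def specializeVar (i : ι) {r : k} (hr : r ≠ 0) :
    AddMonoidAlgebra k (ι →₀ ℤ) →ₐ[k] AddMonoidAlgebra k (ι →₀ ℤ) :=
  lift k _ _
    { toFun := fun a => single (a.toAdd.erase i) (r ^ a.toAdd i)
      map_one' := by simp [one_def]
      map_mul' := fun a b => by simp [single_mul_single, Finsupp.erase_add, zpow_add₀ hr] }

theorem specializeVar_single (i : ι) {r : k} (hr : r ≠ 0) (a : ι →₀ ℤ) (c : k) :
    specializeVar i hr (single a c) = single (a.erase i) (c * r ^ a i) := by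
  simp [specializeVar]

theorem sub_dvd_sub_specializeVar (i : ι) {r : k} (hr : r ≠ 0)
    (f : AddMonoidAlgebra k (ι →₀ ℤ)) :
    (single (Finsupp.single i 1) 1 - single 0 r) ∣ f - specializeVar i hr f := by
  induction f using AddMonoidAlgebra.induction_linear with
  | zero => simp
  | add f g hf hg => simpa [add_sub_add_comm] using dvd_add hf hg
  | single a c =>
    have hmono : single a c - single (a.erase i) (c * r ^ a i) = single (a.erase i) c *
        (single (a i • Finsupp.single i 1) 1 - single 0 (r ^ a i)) := by
      rw [mul_sub, single_mul_single, single_mul_single, Finsupp.smul_single_one, mul_one,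
        add_zero, Finsupp.erase_add_single]
    rw [specializeVar_single, hmono]
    exact dvd_mul_of_dvd_right (single_sub_single_dvd_single_zsmul_sub_single_zpow _ hr _) _

theorem sub_dvd_iff_specializeVar_eq_zero (i : ι) {r : k} (hr : r ≠ 0)
    (f : AddMonoidAlgebra k (ι →₀ ℤ)) :
    (single (Finsupp.single i 1) 1 - single 0 r) ∣ f ↔ specializeVar i hr f = 0 := by
  refine ⟨?_, fun hf => by simpa [hf] using sub_dvd_sub_specializeVar i hr f⟩
  rintro ⟨g, rfl⟩
  simp [specializeVar_single]

theorem prime_single_sub_single (i : ι) {r : k} (hr : r ≠ 0) :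
    Prime (single (Finsupp.single i 1) 1 - single 0 r : AddMonoidAlgebra k (ι →₀ ℤ)) := by
  refine ⟨?_, fun hu => ?_, fun f g hfg => ?_⟩
  · simp [sub_eq_zero, single_inj]
  · simpa using (sub_dvd_iff_specializeVar_eq_zero i hr 1).mp hu.dvd
  · simpa only [sub_dvd_iff_specializeVar_eq_zero i hr, map_mul, mul_eq_zero] using hfg

end Specialization

theorem prime_single_basis_sub_single {k G ι : Type*} [Field k] [AddCommGroup G]
    (b : Module.Basis ι ℤ G) (i : ι) {r : k} (hr : r ≠ 0) :
    Prime (single (b i) 1 - single 0 r : AddMonoidAlgebra k G) := by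
  rw [← MulEquiv.prime_iff (domCongr k k b.repr.toAddEquiv)]
  simpa [domCongr_single] using prime_single_sub_single i hr

end AddMonoidAlgebra

namespace CCnDAHA

theorem stmt0_general (N : ℕ) (v : Fin N →₀ ℤ) (hv : v ≠ 0)
    (ω₀ : ℂ) (m₀ : ℕ) (hm₀ : 0 < m₀) (hω₀ : ω₀ ^ m₀ = 1)
    (p : LaurentMv ℂ N) (hp : Irreducible p)
    (hdvd : p ∣ (AddMonoidAlgebra.single v 1 - AddMonoidAlgebra.single 0 ω₀)) :
    ∃ (u : (LaurentMv ℂ N)ˣ) (w : Fin N →₀ ℤ) (ω : ℂ) (m : ℕ),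
      w ≠ 0 ∧ 0 < m ∧ ω ^ m = 1 ∧
      p = (u : LaurentMv ℂ N) *
        (AddMonoidAlgebra.single w 1 - AddMonoidAlgebra.single 0 ω) := by
  obtain ⟨b, i, d, rfl⟩ := exists_basis_eq_nsmul Finsupp.basisSingleOne hv
  have hd : 0 < d := Nat.pos_of_ne_zero (by rintro rfl; simp at hv)
  have hω₀ne : ω₀ ≠ 0 := by rintro rfl; simp [hm₀.ne'] at hω₀
  have hfactor : (single (d • b i) 1 - single 0 ω₀ : LaurentMv ℂ N) =
      ((nthRoots d ω₀).map fun r => single (b i) 1 - single 0 r).prod := by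
    simpa [coe_algebraMap] using
      pow_sub_algebraMap_eq_prod_nthRoots (single (b i) 1 : LaurentMv ℂ N) hd.ne' ω₀
  have hprime : ∀ q ∈ (nthRoots d ω₀).map fun r => (single (b i) 1 - single 0 r : LaurentMv ℂ N),
      Prime q := by
    simp only [Multiset.forall_mem_map_iff, mem_nthRoots hd]
    rintro r hr
    exact prime_single_basis_sub_single b i (by rintro rfl; simp [hd.ne', hω₀ne.symm] at hr)
  obtain ⟨q, hq, hpq⟩ := hp.exists_associated_mem_of_dvd_prod hprime (hfactor ▸ hdvd)
  obtain ⟨r, hr, rfl⟩ := Multiset.mem_map.mp hq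
  rw [mem_nthRoots hd] at hr
  obtain ⟨u, hu⟩ := hpq.symm
  exact ⟨u, b i, r, d * m₀, b.ne_zero i, Nat.mul_pos hd hm₀, by rw [pow_mul, hr, hω₀],
    by rw [← hu, mul_comm]⟩

/-- every irreducible factor of X^v − ω₀ (ω₀ a root of unity, v ≠ 0) in the
Laurent polynomial ring ℂ[x_1^{±1},…,x_N^{±1}] is a unit times (X^w − ω) with w ≠ 0 and
ω a root of unity. -/
theorem stmt0 (N : ℕ) (hN : 1 ≤ N) (v : Fin N →₀ ℤ) (hv : v ≠ 0)
    (ω₀ : ℂ) (m₀ : ℕ) (hm₀ : 0 < m₀) (hω₀ : ω₀ ^ m₀ = 1)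
    (p : LaurentMv ℂ N) (hp : Irreducible p)
    (hdvd : p ∣ (AddMonoidAlgebra.single v 1 - AddMonoidAlgebra.single 0 ω₀)) :
    ∃ (u : (LaurentMv ℂ N)ˣ) (w : Fin N →₀ ℤ) (ω : ℂ) (m : ℕ),
      w ≠ 0 ∧ 0 < m ∧ ω ^ m = 1 ∧
      p = (u : LaurentMv ℂ N) *
        (AddMonoidAlgebra.single w 1 - AddMonoidAlgebra.single 0 ω) :=
  stmt0_general N v hv ω₀ m₀ hm₀ hω₀ p hp hdvd

end CCnDAHA
end

section
/- Let A be the Laurent polynomial ring over ℂ in N ≥ 1 variables, let v ∈ ℤ^N be a primitive vector (the gcd of its entries is 1), and let ω ∈ ℂ be a primitive ℓ-th root of unity. Then s = X^v − ω is irreducible in A, and if s divides X^{v'} − 1 in A for some v' ∈ ℤ^N, then v' = ℓ·m·v for some integer m. -/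
/-!
Since `v` is primitive, Bézout gives `L : ℤ^N →+ ℤ` with `L v = 1`, so `ℤ^N = ker L ⊕ ℤ v`.
The algebra endomorphism `π : X^w ↦ ω^(L w) X^(w - L(w) v)` of `A` kills `s = X^v - ω`, and
`s ∣ f - π f` for every `f`, because `s ∣ X^(k v) - ω^k`. Hence `(s) = ker π`, a prime ideal as
`A` is a domain. If `s ∣ X^v' - 1`, then `π (X^v') = ω^(L v') X^(v' - L(v') v)` equals `1`, so
`v' = L(v') v` and `ω^(L v') = 1`, i.e. `ℓ ∣ L v'`.
-/

open scoped Classical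

theorem Finsupp.exists_addMonoidHom_eq_one_of_gcd_eq_one {ι : Type*} [Fintype ι] {v : ι →₀ ℤ}
    (hv : Finset.univ.gcd (fun i => v i) = 1) : ∃ L : (ι →₀ ℤ) →+ ℤ, L v = 1 := by
  obtain ⟨g, hg⟩ := Finset.univ.gcd_eq_sum_mul (fun i => v i)
  refine ⟨∑ i, g i • Finsupp.applyAddHom i, ?_⟩
  simp [← hv, hg, mul_comm]

namespace Units

variable {R : Type*} [CommRing R]

theorem sub_dvd_inv_sub_inv (a b : Rˣ) : ((a : R) - b) ∣ ↑a⁻¹ - ↑b⁻¹ :=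
  ⟨-(↑a⁻¹ * ↑b⁻¹), by linear_combination (↑b⁻¹ : R) * a.inv_mul - (↑a⁻¹ : R) * b.inv_mul⟩

theorem sub_dvd_zpow_sub_zpow (a b : Rˣ) (k : ℤ) : ((a : R) - b) ∣ ↑(a ^ k) - ↑(b ^ k) := by
  have hpow (n : ℕ) : ((a : R) - b) ∣ ↑(a ^ n) - ↑(b ^ n) := by
    simpa using sub_dvd_pow_sub_pow (a : R) b n
  obtain ⟨n, rfl | rfl⟩ := Int.eq_nat_or_neg k
  · simpa using hpow n
  · simpa using (hpow n).trans (sub_dvd_inv_sub_inv _ _)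

end Units

namespace AddMonoidAlgebra

variable {R M : Type*} [CommRing R] [AddCommGroup M]

theorem single_sub_single_dvd_single_zsmul_sub (v : M) (c : Rˣ) (k : ℤ) :
    (single v 1 - single 0 (c : R) : AddMonoidAlgebra R M) ∣
      single (k • v) 1 - single 0 ((c ^ k : Rˣ) : R) := by
  simpa [← map_zpow] using Units.sub_dvd_zpow_sub_zpow ((of R M).toHomUnits (.ofAdd v))
    (Units.map (algebraMap R (AddMonoidAlgebra R M)).toMonoidHom c) k

variable (L : M →+ ℤ) (v : M) (c : Rˣ)

noncomputable def retraction : AddMonoidAlgebra R M →ₐ[R] AddMonoidAlgebra R M :=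
  lift R (AddMonoidAlgebra R M) M
    { toFun w := single (w.toAdd - L w.toAdd • v) ↑(c ^ L w.toAdd)
      map_one' := by simp [one_def]
      map_mul' w w' := by
        simp only [toAdd_mul, map_add, single_mul_single, zpow_add, Units.val_mul, add_smul]
        congr 1
        abel }

theorem retraction_single (w : M) (a : R) :
    retraction L v c (single w a) = single (w - L w • v) (a * ↑(c ^ L w)) := by
  simp [retraction, lift_single, smul_single]

theorem single_sub_single_dvd_sub_retraction (f : AddMonoidAlgebra R M) :
    single v 1 - single 0 (c : R) ∣ f - retraction L v c f := by
  induction f using induction_linear with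
  | zero => simp
  | add f g hf hg => simpa [add_sub_add_comm] using dvd_add hf hg
  | single w a =>
    have hsplit : single w a - retraction L v c (single w a) =
        single (w - L w • v) a * (single (L w • v) 1 - single 0 ((c ^ L w : Rˣ) : R)) := by
      rw [retraction_single, mul_sub, single_mul_single, single_mul_single, sub_add_cancel,
        add_zero, mul_one]
    rw [hsplit]
    exact dvd_mul_of_dvd_right (single_sub_single_dvd_single_zsmul_sub v c _) _

variable {L v}

theorem retraction_single_sub_single (hv : L v = 1) :
    retraction L v c (single v 1 - single 0 (c : R)) = 0 := by
  simp [retraction_single, hv]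

theorem single_sub_single_dvd_iff (hv : L v = 1) {f : AddMonoidAlgebra R M} :
    single v 1 - single 0 (c : R) ∣ f ↔ retraction L v c f = 0 := by
  refine ⟨?_, fun hf => by simpa [hf] using single_sub_single_dvd_sub_retraction L v c f⟩
  rintro ⟨g, rfl⟩
  rw [map_mul, retraction_single_sub_single c hv, zero_mul]

theorem prime_single_sub_single_s1 [Nontrivial R] [NoZeroDivisors (AddMonoidAlgebra R M)]
    (hv : L v = 1) : Prime (single v 1 - single 0 (c : R) : AddMonoidAlgebra R M) := by
  have : IsDomain (AddMonoidAlgebra R M) := NoZeroDivisors.to_isDomain _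
  have hv0 : v ≠ 0 := by rintro rfl; simp at hv
  have hs0 : single v 1 - single 0 (c : R) ≠ 0 := by
    simp [sub_eq_zero, single_inj, hv0]
  have hker : Ideal.span {single v 1 - single 0 (c : R)} = RingHom.ker (retraction L v c) := by
    ext f
    rw [Ideal.mem_span_singleton, RingHom.mem_ker, single_sub_single_dvd_iff c hv]
  rw [← Ideal.span_singleton_prime hs0, hker]
  exact RingHom.ker_isPrime _

theorem eq_zsmul_of_single_sub_single_dvd [Nontrivial R] (hv : L v = 1) {w : M}
    (h : single v 1 - single 0 (c : R) ∣ single w 1 - single 0 1) :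
    ∃ k : ℤ, w = k • v ∧ c ^ k = 1 := by
  rw [single_sub_single_dvd_iff c hv, map_sub, retraction_single, retraction_single,
    sub_eq_zero] at h
  exact ⟨L w, by simpa [single_inj, sub_eq_zero] using h⟩

end AddMonoidAlgebra

namespace CCnDAHA

theorem stmt1_general (N : ℕ) (v : Fin N →₀ ℤ)
    (hv : Finset.univ.gcd (fun i => v i) = 1)
    (ℓ : ℕ) (hℓ : 0 < ℓ) (ω : ℂ) (hω : IsPrimitiveRoot ω ℓ) :
    Irreducible ((AddMonoidAlgebra.single v 1 - AddMonoidAlgebra.single 0 ω : LaurentMv ℂ N)) ∧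
    ∀ v' : Fin N →₀ ℤ,
      ((AddMonoidAlgebra.single v 1 - AddMonoidAlgebra.single 0 ω : LaurentMv ℂ N) ∣
        (AddMonoidAlgebra.single v' 1 - AddMonoidAlgebra.single 0 1)) →
      ∃ m : ℤ, v' = ((ℓ : ℤ) * m) • v := by
  obtain ⟨L, hL⟩ := Finsupp.exists_addMonoidHom_eq_one_of_gcd_eq_one hv
  set c : ℂˣ := (hω.isUnit hℓ.ne').unit
  have hc : (c : ℂ) = ω := IsUnit.unit_spec _
  rw [← hc]
  refine ⟨(AddMonoidAlgebra.prime_single_sub_single_s1 c hL).irreducible, fun v' hdvd => ?_⟩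
  obtain ⟨k, rfl, hck⟩ := AddMonoidAlgebra.eq_zsmul_of_single_sub_single_dvd c hL hdvd
  obtain ⟨m, rfl⟩ := (hω.zpow_eq_one_iff_dvd k).1 (by simpa [hc] using congrArg Units.val hck)
  exact ⟨m, rfl⟩

/-- for v primitive and ω a primitive ℓ-th root of unity, s = X^v − ω is
irreducible in ℂ[x_1^{±1},…,x_N^{±1}], and s ∣ X^{v'} − 1 implies v' = ℓ·m·v for some m ∈ ℤ. -/
theorem stmt1 (N : ℕ) (hN : 1 ≤ N) (v : Fin N →₀ ℤ)
    (hv : Finset.univ.gcd (fun i => v i) = 1)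
    (ℓ : ℕ) (hℓ : 0 < ℓ) (ω : ℂ) (hω : IsPrimitiveRoot ω ℓ) :
    Irreducible ((AddMonoidAlgebra.single v 1 - AddMonoidAlgebra.single 0 ω : LaurentMv ℂ N)) ∧
    ∀ v' : Fin N →₀ ℤ,
      ((AddMonoidAlgebra.single v 1 - AddMonoidAlgebra.single 0 ω : LaurentMv ℂ N) ∣
        (AddMonoidAlgebra.single v' 1 - AddMonoidAlgebra.single 0 1)) →
      ∃ m : ℤ, v' = ((ℓ : ℤ) * m) • v :=
  stmt1_general N v hv ℓ hℓ ω hω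

end CCnDAHA
end

section
/- Let n ≥ 2, let K be a field, and let q, t, a ∈ K^×. For λ ∈ ℤ^n define y(λ)_i = q^{λ_i}·t^{ρ(λ)_i}·a^{σ(λ)_i}. Suppose λ, μ ∈ ℤ^n satisfy λ ≠ μ and y(λ)_i = y(μ)_i for all 1 ≤ i ≤ n. Then either there exist integers α, β with 0 ≤ α ≤ n−1 and β ≥ 1 such that t^α q^β = 1, or there exist integers α, β with 0 ≤ α ≤ 2n−2 and β ≥ 1 such that t^α q^β a² = 1. -/
/-!
Comparing the `i`-th Y-eigenvalues gives
`q ^ (λ_i - μ_i) * t ^ (ρ(λ)_i - ρ(μ)_i) * a ^ (σ(λ)_i - σ(μ)_i) = 1`.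
If `σ(λ)_i ≠ σ(μ)_i` for some `i`, this is a relation of the second kind: `ρ(λ)_i` and `ρ(μ)_i`
have opposite signs and absolute values at most `n - 1`.
If `σ(λ) = σ(μ)`, the ordering `i_1, …, i_n` is the decreasing order of the key
`(|λ_i|, σ_i (n - i))`, whose second component is the same for `λ` and `μ`. Among the indices
where `λ` and `μ` differ, take one whose key, for `λ` or for `μ`, is largest, say for `λ`.
Every index preceding it in the ordering for `λ` then also precedes it for `μ`, so
`|ρ(λ)_i| ≥ |ρ(μ)_i|`, while `|λ_i| > |μ_i|`: a relation of the first kind.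
-/

open scoped Classical

namespace CCnDAHA

variable {n : ℕ}




/-- σ(λ)_i = +1 if λ_i ≥ 0, −1 otherwise. -/
def sgn (lam : Fin n → ℤ) (i : Fin n) : ℤ := if 0 ≤ lam i then 1 else -1

/-- `Prec lam i j` : index `i` strictly precedes `j` in the ordering i_1,…,i_n. -/
def Prec (lam : Fin n → ℤ) (i j : Fin n) : Prop :=
  |lam j| < |lam i| ∨
    (|lam i| = |lam j| ∧
      ((0 ≤ lam i ∧ lam j < 0) ∨
       (0 ≤ lam i ∧ 0 ≤ lam j ∧ i < j) ∨
       (lam i < 0 ∧ lam j < 0 ∧ j < i)))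

/-- 0-based position of index `i` in the ordering i_1,…,i_n (position m−1). -/
noncomputable def posOf (lam : Fin n → ℤ) (i : Fin n) : ℕ :=
  (Finset.univ.filter (fun j => Prec lam j i)).card

/-- ρ(λ)_i = σ(λ)_i · (n − m) where i = i_m. -/
noncomputable def rho (lam : Fin n → ℤ) (i : Fin n) : ℤ :=
  sgn lam i * ((n : ℤ) - 1 - (posOf lam i : ℤ))

/-- (a,b)-neighborhood. -/
noncomputable def IsNbhd (a b : ℤ) (lam : Fin n → ℤ) (i j : Fin n) : Prop :=
  |rho lam i| - |rho lam j| = a - 1 ∧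
  |lam i| - |lam j| ≤ b ∧
  (|lam i| - |lam j| = b →
    ((0 ≤ lam i ∧ 0 ≤ lam j ∧ j < i) ∨
     (lam i < 0 ∧ lam j < 0 ∧ i < j) ∨
     (lam i < 0 ∧ 0 ≤ lam j)))

/-- (a,b)-admissible: no (a,b)-neighborhood. -/
noncomputable def Admissible (a b : ℤ) (lam : Fin n → ℤ) : Prop :=
  ∀ i j, ¬ IsNbhd a b lam i j

/-- number of (a,b)-neighborhoods. -/
noncomputable def nbhdCount (a b : ℤ) (lam : Fin n → ℤ) : ℕ :=
  ((Finset.univ : Finset (Fin n × Fin n)).filter (fun p => IsNbhd a b lam p.1 p.2)).card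

/-- dot action of the affine simple reflection s_i (0 ≤ i ≤ n, 1-based paper indexing). -/
noncomputable def dotAct (i : ℕ) (lam : Fin n → ℤ) : Fin n → ℤ := fun j =>
  if i = 0 then (if (j : ℕ) = 0 then -1 - lam j else lam j)
  else if i = n then (if (j : ℕ) + 1 = n then -lam j else lam j)
  else if h1 : (j : ℕ) + 1 = i ∧ i < n then lam ⟨(j : ℕ) + 1, by omega⟩
  else if h2 : (j : ℕ) = i then lam ⟨(j : ℕ) - 1, by have := j.isLt; omega⟩
  else lam j

/-- pairing ⟨λ, α_i⟩, for 0 ≤ i ≤ n. -/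
noncomputable def pairing (i : ℕ) (lam : Fin n → ℤ) : ℤ :=
  if hn : n = 0 then 0
  else if i = 0 then -2 * lam ⟨0, by omega⟩
  else if i = n then 2 * lam ⟨n - 1, by omega⟩
  else lam ⟨(i - 1) % n, Nat.mod_lt _ (by omega)⟩ - lam ⟨i % n, Nat.mod_lt _ (by omega)⟩

/-- partial sum λ_1 + ⋯ + λ_j. -/
def psum (lam : Fin n → ℤ) (j : Fin n) : ℤ :=
  ∑ i ∈ Finset.univ.filter (fun i => i ≤ j), lam i

/-- dominance order: μ ≤ λ. -/
def DomLE (mu lam : Fin n → ℤ) : Prop := ∀ j, psum mu j ≤ psum lam j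

/-- λ⁺ : the weakly decreasing rearrangement of (|λ_1|,…,|λ_n|). -/
noncomputable def lamPlus (lam : Fin n → ℤ) : Fin n → ℤ := fun j =>
  ((Multiset.sort (Multiset.map (fun i => |lam i|) Finset.univ.val) (· ≤ ·)).reverse).getD (j : ℕ) 0

/-- λ ≻ μ. -/
noncomputable def SuccOrd (lam mu : Fin n → ℤ) : Prop :=
  (DomLE (lamPlus mu) (lamPlus lam) ∧ lamPlus lam ≠ lamPlus mu) ∨
  (lamPlus lam = lamPlus mu ∧ DomLE mu lam ∧ lam ≠ mu)

/-- |λ_{i_m}|, with the sentinel value 0 at m = n+1. -/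
noncomputable def absAt (lam : Fin n → ℤ) (m : ℕ) : ℤ :=
  if m = n + 1 then 0
  else ∑ i ∈ Finset.univ.filter (fun i => posOf lam i + 1 = m), |lam i|

/-- σ(λ)_{i_m}, with sentinel value +1 at m = n+1. -/
noncomputable def sgAt (lam : Fin n → ℤ) (m : ℕ) : ℤ :=
  if m = n + 1 then 1
  else ∑ i ∈ Finset.univ.filter (fun i => posOf lam i + 1 = m), sgn lam i

/-- the (1-based) value of the index i_m, with sentinel value n+1 at m = n+1. -/
noncomputable def ixAt (lam : Fin n → ℤ) (m : ℕ) : ℕ :=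
  if m = n + 1 then n + 1
  else ∑ i ∈ Finset.univ.filter (fun i => posOf lam i + 1 = m), ((i : ℕ) + 1)

/-- β_m ∈ {0,1}. -/
noncomputable def betaAt (lam : Fin n → ℤ) (m : ℕ) : ℤ :=
  if (sgAt lam m = 1 ∧ sgAt lam (m + 1) = 1 ∧ ixAt lam (m + 1) < ixAt lam m) ∨
     (sgAt lam m = -1 ∧ sgAt lam (m + 1) = -1 ∧ ixAt lam m < ixAt lam (m + 1)) ∨
     (sgAt lam m = -1 ∧ sgAt lam (m + 1) = 1)
  then 1 else 0

/-- p_m = ⌊(|λ_{i_m}| − |λ_{i_{m+1}}| − β_m)/b⌋ (b plays the role of r−1). -/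
noncomputable def pAt (b : ℤ) (lam : Fin n → ℤ) (m : ℕ) : ℤ :=
  Int.fdiv (absAt lam m - absAt lam (m + 1) - betaAt lam m) b

/-- the b-quotient λ^{quot} (b plays the role of r−1): j-th entry is p_j + ⋯ + p_n
(1-based j = (j:Fin n) + 1). -/
noncomputable def quotOf (b : ℤ) (lam : Fin n → ℤ) : Fin n → ℤ := fun j =>
  ∑ m ∈ Finset.Icc ((j : ℕ) + 1) n, pAt b lam m

/-- fundamental weight ϖ_j (1-based j = (j : Fin n)+1): first j entries 1, rest 0. -/
def varpi (j : Fin n) : Fin n → ℤ := fun i => if i ≤ j then 1 else 0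



theorem zpow_mul_zpow_mul_zpow_sub_eq_one {G : Type*} [CommGroupWithZero G] {q t a : G}
    (hq : q ≠ 0) (ht : t ≠ 0) (ha : a ≠ 0) {x₁ y₁ z₁ x₂ y₂ z₂ : ℤ}
    (h : q ^ x₁ * t ^ y₁ * a ^ z₁ = q ^ x₂ * t ^ y₂ * a ^ z₂) :
    q ^ (x₁ - x₂) * t ^ (y₁ - y₂) * a ^ (z₁ - z₂) = 1 := by
  have hne : q ^ x₂ * t ^ y₂ * a ^ z₂ ≠ 0 :=
    mul_ne_zero (mul_ne_zero (zpow_ne_zero _ hq) (zpow_ne_zero _ ht)) (zpow_ne_zero _ ha)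
  rw [zpow_sub₀ hq, zpow_sub₀ ht, zpow_sub₀ ha, div_mul_div_comm, div_mul_div_comm, h,
    div_self hne]

theorem sgn_eq_one_or_neg_one (lam : Fin n → ℤ) (i : Fin n) : sgn lam i = 1 ∨ sgn lam i = -1 := by
  unfold sgn; split_ifs <;> simp

theorem sub_eq_sgn_mul_abs_sub {lam mu : Fin n → ℤ} {i : Fin n} (hs : sgn lam i = sgn mu i) :
    lam i - mu i = sgn lam i * (|lam i| - |mu i|) := by
  unfold sgn at *
  rcases abs_cases (lam i) with ⟨hl, _⟩ | ⟨hl, _⟩ <;> rcases abs_cases (mu i) with ⟨hm, _⟩ | ⟨hm, _⟩ <;>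
    rw [hl, hm] <;> split_ifs at * <;> omega

theorem rho_sub_rho {lam mu : Fin n → ℤ} {i : Fin n} (hs : sgn lam i = sgn mu i) :
    rho lam i - rho mu i = sgn lam i * ((posOf mu i : ℤ) - posOf lam i) := by
  unfold rho; rw [hs]; ring

def precKey (lam : Fin n → ℤ) (i : Fin n) : ℤ ×ₗ ℤ :=
  toLex (|lam i|, sgn lam i * ((n : ℤ) - (i : ℕ)))

theorem prec_iff_precKey_lt (lam : Fin n → ℤ) (j i : Fin n) :
    Prec lam j i ↔ precKey lam i < precKey lam j := by
  have := i.isLt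
  have := j.isLt
  unfold Prec precKey sgn
  rw [Prod.Lex.toLex_lt_toLex, Fin.lt_def, Fin.lt_def]
  split_ifs <;> dsimp only <;> omega

theorem posOf_lt (lam : Fin n → ℤ) (i : Fin n) : posOf lam i < n := by
  have hsub : Finset.univ.filter (fun j => Prec lam j i) ⊂ Finset.univ :=
    Finset.filter_ssubset.2 ⟨i, Finset.mem_univ i, by simp [prec_iff_precKey_lt]⟩
  unfold posOf
  simpa using Finset.card_lt_card hsub

theorem posOf_le_posOf {lam mu : Fin n → ℤ} {i : Fin n}
    (hlt : precKey mu i < precKey lam i)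
    (hmax : ∀ j, lam j ≠ mu j → precKey lam j ≤ precKey lam i) :
    posOf lam i ≤ posOf mu i := by
  refine Finset.card_le_card fun j hj => ?_
  simp only [Finset.mem_filter, Finset.mem_univ, true_and, prec_iff_precKey_lt] at hj ⊢
  by_cases hj' : lam j = mu j
  · have hkey : precKey mu j = precKey lam j := by simp only [precKey, sgn, hj']
    rw [hkey]
    exact hlt.trans hj
  · exact absurd (hmax j hj') (not_le.2 hj)

theorem abs_lt_abs_of_precKey_lt {lam mu : Fin n → ℤ} {i : Fin n} (hs : sgn lam i = sgn mu i)
    (hlt : precKey mu i < precKey lam i) : |mu i| < |lam i| := by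
  simpa [precKey, Prod.Lex.toLex_lt_toLex, hs] using hlt

theorem precKey_ne_precKey {lam mu : Fin n → ℤ} {i : Fin n} (hs : sgn lam i = sgn mu i)
    (hne : lam i ≠ mu i) : precKey lam i ≠ precKey mu i := by
  intro h
  have habs : |lam i| = |mu i| := congrArg (fun k => (ofLex k).1) h
  have hsub := sub_eq_sgn_mul_abs_sub hs
  rw [habs, sub_self, mul_zero, sub_eq_zero] at hsub
  exact hne hsub

theorem exists_abs_lt_and_posOf_le {lam mu : Fin n → ℤ} (hσ : ∀ k, sgn lam k = sgn mu k)
    (hne : lam ≠ mu) :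
    ∃ i, (|mu i| < |lam i| ∧ posOf lam i ≤ posOf mu i) ∨
      (|lam i| < |mu i| ∧ posOf mu i ≤ posOf lam i) := by
  obtain ⟨j₀, hj₀⟩ := Function.ne_iff.1 hne
  obtain ⟨i, hi, hmax⟩ := (Finset.univ.filter fun j => lam j ≠ mu j).exists_max_image
    (fun j => max (precKey lam j) (precKey mu j)) ⟨j₀, by simpa using hj₀⟩
  simp only [Finset.mem_filter, Finset.mem_univ, true_and] at hi hmax
  refine ⟨i, ?_⟩
  rcases (precKey_ne_precKey (hσ i) hi).lt_or_gt with hlt | hlt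
  · have hmax' : ∀ j, mu j ≠ lam j → precKey mu j ≤ precKey mu i := fun j hj =>
      (le_max_right _ _).trans ((hmax j hj.symm).trans (max_eq_right hlt.le).le)
    exact Or.inr ⟨abs_lt_abs_of_precKey_lt (hσ i).symm hlt,
      posOf_le_posOf hlt hmax'⟩
  · have hmax' : ∀ j, lam j ≠ mu j → precKey lam j ≤ precKey lam i := fun j hj =>
      (le_max_left _ _).trans ((hmax j hj).trans (max_eq_left hlt.le).le)
    exact Or.inl ⟨abs_lt_abs_of_precKey_lt (hσ i) hlt, posOf_le_posOf hlt hmax'⟩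

theorem exists_zpow_mul_zpow_eq_one_of_sgn_eq {G : Type*} [CommGroupWithZero G] {q t a : G}
    (hq : q ≠ 0) (ht : t ≠ 0) (ha : a ≠ 0) {lam mu : Fin n → ℤ} {i : Fin n}
    (hs : sgn lam i = sgn mu i) (habs : |mu i| < |lam i|) (hpos : posOf lam i ≤ posOf mu i)
    (hy : q ^ (lam i) * t ^ (rho lam i) * a ^ (sgn lam i)
        = q ^ (mu i) * t ^ (rho mu i) * a ^ (sgn mu i)) :
    ∃ α β : ℤ, 0 ≤ α ∧ α ≤ (n : ℤ) - 1 ∧ 1 ≤ β ∧ t ^ α * q ^ β = 1 := by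
  have hrel := zpow_mul_zpow_mul_zpow_sub_eq_one hq ht ha hy
  rw [hs, sub_self, zpow_zero, mul_one, sub_eq_sgn_mul_abs_sub hs, rho_sub_rho hs,
    zpow_mul', zpow_mul', ← mul_zpow] at hrel
  refine ⟨posOf mu i - posOf lam i, |lam i| - |mu i|, by omega,
    by have := posOf_lt mu i; omega, by omega, ?_⟩
  rw [mul_comm]
  rcases sgn_eq_one_or_neg_one lam i with h | h
  · rwa [h, zpow_one] at hrel
  · rwa [h, zpow_neg_one, inv_eq_one] at hrel

theorem exists_zpow_mul_zpow_mul_sq_eq_one {G : Type*} [CommGroupWithZero G] {q t a : G}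
    (hq : q ≠ 0) (ht : t ≠ 0) (ha : a ≠ 0) {lam mu : Fin n → ℤ} {i : Fin n}
    (hlam : 0 ≤ lam i) (hmu : mu i < 0)
    (hy : q ^ (lam i) * t ^ (rho lam i) * a ^ (sgn lam i)
        = q ^ (mu i) * t ^ (rho mu i) * a ^ (sgn mu i)) :
    ∃ α β : ℤ, 0 ≤ α ∧ α ≤ 2 * (n : ℤ) - 2 ∧ 1 ≤ β ∧ t ^ α * q ^ β * a ^ (2 : ℤ) = 1 := by
  have hrel := zpow_mul_zpow_mul_zpow_sub_eq_one hq ht ha hy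
  have hsl : sgn lam i = 1 := if_pos hlam
  have hsm : sgn mu i = -1 := if_neg (not_le.2 hmu)
  have hl := posOf_lt lam i
  have hm := posOf_lt mu i
  refine ⟨rho lam i - rho mu i, lam i - mu i, ?_, ?_, by omega, ?_⟩
  · rw [rho, rho, hsl, hsm]; omega
  · rw [rho, rho, hsl, hsm]; omega
  · rw [hsl, hsm, show (1 : ℤ) - -1 = 2 by norm_num] at hrel
    rwa [mul_comm (t ^ _)]

theorem stmt2_general {K : Type*} [Field K] (n : ℕ)
    (q t a : K) (hq : q ≠ 0) (ht : t ≠ 0) (ha : a ≠ 0)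
    (lam mu : Fin n → ℤ) (hne : lam ≠ mu)
    (hy : ∀ i, q ^ (lam i) * t ^ (rho lam i) * a ^ (sgn lam i)
            = q ^ (mu i) * t ^ (rho mu i) * a ^ (sgn mu i)) :
    (∃ α β : ℤ, 0 ≤ α ∧ α ≤ (n : ℤ) - 1 ∧ 1 ≤ β ∧ t ^ α * q ^ β = 1) ∨
    (∃ α β : ℤ, 0 ≤ α ∧ α ≤ 2 * (n : ℤ) - 2 ∧ 1 ≤ β ∧ t ^ α * q ^ β * a ^ (2 : ℤ) = 1) := by
  by_cases hσ : ∀ k, sgn lam k = sgn mu k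
  · left
    obtain ⟨i, ⟨habs, hpos⟩ | ⟨habs, hpos⟩⟩ := exists_abs_lt_and_posOf_le hσ hne
    · exact exists_zpow_mul_zpow_eq_one_of_sgn_eq hq ht ha (hσ i) habs hpos (hy i)
    · exact exists_zpow_mul_zpow_eq_one_of_sgn_eq hq ht ha (hσ i).symm habs hpos (hy i).symm
  · right
    obtain ⟨i, hi⟩ := not_forall.1 hσ
    unfold sgn at hi
    split_ifs at hi with hlam hmu hmu
    · exact absurd rfl hi
    · exact exists_zpow_mul_zpow_mul_sq_eq_one hq ht ha hlam (not_le.1 hmu) (hy i)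
    · exact exists_zpow_mul_zpow_mul_sq_eq_one hq ht ha hmu (not_le.1 hlam) (hy i).symm
    · exact absurd rfl hi

/-- if two Y-eigenvalue vectors coincide for λ ≠ μ, the parameters satisfy
t^α q^β = 1 (0 ≤ α ≤ n−1, β ≥ 1) or t^α q^β a² = 1 (0 ≤ α ≤ 2n−2, β ≥ 1). -/
theorem stmt2 {K : Type*} [Field K] (n : ℕ) (hn : 2 ≤ n)
    (q t a : K) (hq : q ≠ 0) (ht : t ≠ 0) (ha : a ≠ 0)
    (lam mu : Fin n → ℤ) (hne : lam ≠ mu)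
    (hy : ∀ i, q ^ (lam i) * t ^ (rho lam i) * a ^ (sgn lam i)
            = q ^ (mu i) * t ^ (rho mu i) * a ^ (sgn mu i)) :
    (∃ α β : ℤ, 0 ≤ α ∧ α ≤ (n : ℤ) - 1 ∧ 1 ≤ β ∧ t ^ α * q ^ β = 1) ∨
    (∃ α β : ℤ, 0 ≤ α ∧ α ≤ 2 * (n : ℤ) - 2 ∧ 1 ≤ β ∧ t ^ α * q ^ β * a ^ (2 : ℤ) = 1) :=
  stmt2_general n q t a hq ht ha lam mu hne hy

end CCnDAHA
end

section
/- Fix integers n ≥ 2, k, r with n ≥ k+1 ≥ 2 and r−1 ≥ 1. Let λ, μ ∈ ℤ^n be such that λ has at most one (k+1, r−1)-neighborhood, σ(λ)_i = σ(μ)_i for all i, and there exist integers m_1, …, m_n with λ_i = μ_i + (r−1)m_i and ρ(λ)_i = ρ(μ)_i + (k+1)m_i for all 1 ≤ i ≤ n. Then λ = μ. -/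
open scoped Classical

namespace CCnDAHA

variable {n : ℕ}




/-!
Listing indices by decreasing `key λ i = 2n|λ_i| + τ_i`, with a tie-break `τ_i ∈ [0, 2n)` that
depends only on `i` and the sign of `λ_i`, gives the order `i_1, …, i_n`, so positions become
ranks. With `c_i = σ_i m_i` the hypotheses read `key μ = key λ - 2n(r-1)c` and
`rank μ = rank λ + (k+1)c`. Walk through the indices in `μ`-order: wherever `c` increases, by some
`D ≥ 1`, the `λ`-rank drops by `(k+1)D - 1` while the `λ`-key falls by less than `2n(r-1)D`
across that stretch. Chains of windows `[t, t + k]` of positions force `D = 1`, and the stretch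
is then a single window on which the key falls by less than `2n(r-1)`: a neighbourhood.
So `c` increases at most once, and by `1`, along the `μ`-order; as it starts `≤ 0`, ends `≥ 0`
and sums to `0`, it vanishes.
-/

open Finset

def shortWindows (x : ℕ → ℤ) (B : ℤ) (w n : ℕ) : Set ℕ :=
  {t | t + w < n ∧ x t - x (t + w) < B}

section Windows

variable {x : ℕ → ℤ} {B : ℤ} {w n : ℕ}

theorem sub_card_mul_le_of_chain (x : ℕ → ℤ) (B : ℤ) (w e N : ℕ)
    (hx : ∀ j < N, x (e + j * w + w) ≤ x (e + j * w)) :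
    ((N : ℤ) - #{j ∈ range N | x (e + j * w) - x (e + j * w + w) < B}) * B ≤
      x e - x (e + N * w) := by
  have htel : x e - x (e + N * w) = ∑ j ∈ range N, (x (e + j * w) - x (e + j * w + w)) := by
    simpa [add_mul, add_assoc] using (sum_range_sub' (fun j => x (e + j * w)) N).symm
  have hcount : ((N : ℤ) - #{j ∈ range N | x (e + j * w) - x (e + j * w + w) < B}) * B =
      ∑ j ∈ range N, if x (e + j * w) - x (e + j * w + w) < B then 0 else B := by
    rw [sum_ite, sum_const_zero, zero_add, sum_const, nsmul_eq_mul, filter_not,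
      card_sdiff_of_subset (filter_subset _ _), Nat.cast_sub (card_filter_le _ _), card_range]
  rw [htel, hcount]
  refine sum_le_sum fun j hj => ?_
  split_ifs with hj'
  · exact sub_nonneg.2 (hx j (mem_range.1 hj))
  · exact not_lt.1 hj'

theorem mem_shortWindows_of_mem_chain {e N j : ℕ} (hN : e + N * w < n)
    (hj : j ∈ {j ∈ range N | x (e + j * w) - x (e + j * w + w) < B}) :
    e + j * w ∈ shortWindows x B w n := by
  rw [mem_filter, mem_range] at hj
  exact ⟨by nlinarith, hj.2⟩

theorem card_chain_le_one (hw : 1 ≤ w) (hS : (shortWindows x B w n).Subsingleton) {e N : ℕ}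
    (hN : e + N * w < n) :
    #{j ∈ range N | x (e + j * w) - x (e + j * w + w) < B} ≤ 1 :=
  card_le_one.2 fun _ hj _ hj' => Nat.eq_of_mul_eq_mul_right hw <| Nat.add_left_cancel <|
    hS (mem_shortWindows_of_mem_chain hN hj) (mem_shortWindows_of_mem_chain hN hj')

theorem sub_one_mul_le_of_chain (hB : 0 ≤ B) (hw : 1 ≤ w)
    (hx : ∀ t t', t ≤ t' → t' < n → x t' ≤ x t) (hS : (shortWindows x B w n).Subsingleton)
    {e N : ℕ} (hN : e + N * w < n) : ((N : ℤ) - 1) * B ≤ x e - x (e + N * w) :=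
  (mul_le_mul_of_nonneg_right (sub_le_sub_left (by exact_mod_cast card_chain_le_one hw hS hN) _)
    hB).trans (sub_card_mul_le_of_chain x B w e N fun j hj => hx _ _ (by omega) (by nlinarith))

theorem eq_one_of_sub_lt_mul (hB : 0 ≤ B) (hw : 1 ≤ w)
    (hx : ∀ t t', t ≤ t' → t' < n → x t' ≤ x t) (hS : (shortWindows x B w n).Subsingleton)
    {e f D : ℕ} (hf : f < n) (hD : 1 ≤ D) (hfe : f + 1 = e + (w + 1) * D)
    (hdrop : x e - x f < B * D) : D = 1 := by
  by_contra hD1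
  have hfe' : f + 1 = e + D * w + D := by rw [hfe]; ring
  obtain rfl | hw2 : w = 1 ∨ 2 ≤ w := by omega
  · -- all unit steps but one drop by at least `B`
    have h := sub_one_mul_le_of_chain hB hw hx hS (e := e) (N := f - e) (by omega)
    rw [mul_one, Nat.add_sub_cancel' (by omega), Nat.cast_sub (by omega)] at h
    have : (f : ℤ) + 1 = e + 2 * D := by omega
    nlinarith [mul_nonneg (show (0 : ℤ) ≤ D - 2 by omega) hB]
  · -- two chains of `D` windows, starting at `e` and at `e + 1`, cannot share a short window
    have hfit : e + 1 + D * w ≤ f := by omega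
    have hhit (e' : ℕ) (he : e' ≤ e + 1) (hxe : x e' ≤ x e) :
        ∃ j, j ∈ {j ∈ range D | x (e' + j * w) - x (e' + j * w + w) < B} := by
      by_contra! hnone
      have h := sub_card_mul_le_of_chain x B w e' D fun j hj => hx _ _ (by omega) (by nlinarith)
      rw [filter_false_of_mem fun j hj => hnone j ∘ mem_filter.2 ∘ (⟨hj, ·⟩), card_empty] at h
      have : x f ≤ x (e' + D * w) := hx _ _ (by omega) hf
      push_cast at h
      nlinarith
    obtain ⟨j₀, hj₀⟩ := hhit e (by omega) le_rfl
    obtain ⟨j₁, hj₁⟩ := hhit (e + 1) le_rfl (hx _ _ (by omega) (by omega))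
    have := hS (mem_shortWindows_of_mem_chain (by omega) hj₀)
      (mem_shortWindows_of_mem_chain (by omega) hj₁)
    rcases le_or_gt j₀ j₁ with h | h
    · nlinarith [Nat.mul_le_mul_right w h]
    · nlinarith [Nat.mul_le_mul_right w (Nat.succ_le_of_lt h)]

end Windows

theorem le_of_forall_succ_le {g : ℕ → ℤ} {a b : ℕ} (h : ∀ s, a ≤ s → s < b → g (s + 1) ≤ g s)
    (hab : a ≤ b) : g b ≤ g a := by
  induction b, hab using Nat.le_induction with
  | base => exact le_rfl
  | succ b hab ih => exact (h b hab (lt_add_one b)).trans (ih fun s h₁ h₂ => h s h₁ (by omega))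

theorem eq_zero_of_subsingleton_ascents {g : ℕ → ℤ} {n : ℕ} (h0 : g 0 ≤ 0) (hlast : 0 ≤ g (n - 1))
    (hsum : ∑ s ∈ range n, g s = 0) (hstep : ∀ s, s + 1 < n → g (s + 1) ≤ g s + 1)
    (hasc : {s | s + 1 < n ∧ g s < g (s + 1)}.Subsingleton) :
    ∀ s < n, g s = 0 := by
  intro s hs
  obtain ⟨s₀, hs₀n, hs₀⟩ : ∃ s₀ < n, ∀ s, s + 1 < n → s ≠ s₀ → g (s + 1) ≤ g s := by
    by_cases hex : ∃ s₀, s₀ + 1 < n ∧ g s₀ < g (s₀ + 1)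
    · obtain ⟨s₀, hs₀⟩ := hex
      exact ⟨s₀, by omega, fun s hs hne => not_lt.1 fun hlt => hne (hasc ⟨hs, hlt⟩ hs₀)⟩
    · push Not at hex
      exact ⟨0, by omega, fun s hs _ => hex s hs⟩
  have hleft : ∀ s ∈ range (s₀ + 1), g s₀ ≤ g s ∧ g s ≤ 0 := fun s hs => by
    rw [mem_range] at hs
    refine ⟨le_of_forall_succ_le (fun t ht ht' => hs₀ t (by omega) (by omega)) (by omega),
      (le_of_forall_succ_le (fun t _ ht => hs₀ t (by omega) (by omega)) (Nat.zero_le s)).trans h0⟩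
  have hright : ∀ s ∈ Ico (s₀ + 1) n, 0 ≤ g s ∧ g s ≤ g s₀ + 1 := fun s hs => by
    rw [mem_Ico] at hs
    refine ⟨hlast.trans (le_of_forall_succ_le (fun t ht _ => hs₀ t (by omega) (by omega))
      (by omega)), ?_⟩
    exact (le_of_forall_succ_le (fun t ht _ => hs₀ t (by omega) (by omega)) hs.1).trans
      (hstep s₀ (by omega))
  rw [← sum_range_add_sum_Ico _ (show s₀ + 1 ≤ n by omega)] at hsum
  -- one side of the ascent vanishes pointwise, hence so does its sum, hence the other side
  obtain ⟨hL, hR⟩ : (∀ s ∈ range (s₀ + 1), g s = 0) ∧ ∀ s ∈ Ico (s₀ + 1) n, g s = 0 := by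
    rcases le_or_gt 0 (g s₀) with h | h
    · have hL : ∀ s ∈ range (s₀ + 1), g s = 0 := fun s hs =>
        le_antisymm (hleft s hs).2 (h.trans (hleft s hs).1)
      rw [sum_eq_zero hL, zero_add] at hsum
      exact ⟨hL, (sum_eq_zero_iff_of_nonneg fun s hs => (hright s hs).1).1 hsum⟩
    · have hR : ∀ s ∈ Ico (s₀ + 1) n, g s = 0 := fun s hs =>
        le_antisymm (by linarith [(hright s hs).2]) (hright s hs).1
      rw [sum_eq_zero hR, add_zero] at hsum
      exact ⟨(sum_eq_zero_iff_of_nonpos fun s hs => (hleft s hs).2).1 hsum, hR⟩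
  rcases lt_or_ge s (s₀ + 1) with h | h
  · exact hL s (mem_range.2 h)
  · exact hR s (mem_Ico.2 ⟨h, hs⟩)

section Shift

variable {x : ℕ → ℤ} {B : ℤ} {w n : ℕ} {π : ℕ → ℕ} {g : ℕ → ℤ}

theorem ascent_eq_one_and_mem_shortWindows (hB : 0 ≤ B) (hw : 1 ≤ w)
    (hx : ∀ t t', t ≤ t' → t' < n → x t' ≤ x t) (hS : (shortWindows x B w n).Subsingleton)
    (hπ : Set.MapsTo π (range n) (range n))
    (hπg : ∀ s < n, (π s : ℤ) = s - (w + 1) * g s)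
    (hy : ∀ s, s + 1 < n → x (π (s + 1)) - B * g (s + 1) < x (π s) - B * g s)
    {s : ℕ} (hs : s + 1 < n) (hg : g s < g (s + 1)) :
    g (s + 1) = g s + 1 ∧ π (s + 1) ∈ shortWindows x B w n := by
  obtain ⟨D, hD⟩ : ∃ D : ℕ, g (s + 1) - g s = D := ⟨(g (s + 1) - g s).toNat, by omega⟩
  have hfe : π s + 1 = π (s + 1) + (w + 1) * D := by
    have h := hπg (s + 1) hs
    push_cast at h
    have : (π s : ℤ) + 1 = π (s + 1) + (w + 1) * D := by
      rw [← hD]; linear_combination hπg s (by omega) - h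
    exact_mod_cast this
  have hf : π s < n := mem_range.1 (hπ (mem_range.2 (by omega)))
  have hD1 := eq_one_of_sub_lt_mul hB hw hx hS hf (by omega) hfe
    (by rw [← hD]; linarith [hy s hs])
  subst hD1
  have hg1 : g (s + 1) = g s + 1 := by rw [← sub_eq_iff_eq_add', hD, Nat.cast_one]
  have hf' : π s = π (s + 1) + w := by omega
  have hdrop := hy s hs
  rw [hg1, hf'] at hdrop
  exact ⟨hg1, by omega, by linarith⟩

theorem sum_eq_zero_of_perm_shift (hπ : Set.MapsTo π (range n) (range n))
    (hπinj : Set.InjOn π (range n)) (hπg : ∀ s < n, (π s : ℤ) = s - (w + 1) * g s) :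
    ∑ s ∈ range n, g s = 0 := by
  have hperm : ∑ s ∈ range n, π s = ∑ s ∈ range n, s :=
    sum_nbij π (fun _ h => hπ h) hπinj (surjOn_of_injOn_of_card_le π hπ hπinj le_rfl)
      fun _ _ => rfl
  have : ((w : ℤ) + 1) * ∑ s ∈ range n, g s = 0 := by
    rw [mul_sum, sum_congr rfl fun s hs => (by linarith [hπg s (mem_range.1 hs)] :
      ((w : ℤ) + 1) * g s = s - π s), sum_sub_distrib]
    have := congrArg (Nat.cast : ℕ → ℤ) hperm
    push_cast at this
    linarith
  exact (mul_eq_zero.1 this).resolve_left (by positivity)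

theorem eq_zero_of_perm_shift (hB : 0 ≤ B) (hw : 1 ≤ w)
    (hx : ∀ t t', t ≤ t' → t' < n → x t' ≤ x t) (hS : (shortWindows x B w n).Subsingleton)
    (hπ : Set.MapsTo π (range n) (range n)) (hπinj : Set.InjOn π (range n))
    (hπg : ∀ s < n, (π s : ℤ) = s - (w + 1) * g s)
    (hy : ∀ s, s + 1 < n → x (π (s + 1)) - B * g (s + 1) < x (π s) - B * g s) :
    ∀ s < n, g s = 0 := by
  intro s hs
  have hw0 : (0 : ℤ) ≤ w := by positivity
  have hasc {s} (hs : s + 1 < n) (hg : g s < g (s + 1)) :=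
    ascent_eq_one_and_mem_shortWindows hB hw hx hS hπ hπg hy hs hg
  refine eq_zero_of_subsingleton_ascents ?_ ?_ (sum_eq_zero_of_perm_shift hπ hπinj hπg)
    (fun s hs => ?_) (fun s hs s' hs' => ?_) s hs
  · have : (0 : ℤ) ≤ π 0 := by positivity
    have h := hπg 0 (by omega)
    push_cast at h
    nlinarith
  · have : (π (n - 1) : ℤ) ≤ (n - 1 : ℕ) := by
      have := mem_range.1 (hπ (mem_range.2 (show n - 1 < n by omega)))
      exact_mod_cast (by omega : π (n - 1) ≤ n - 1)
    nlinarith [hπg (n - 1) (by omega)]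
  · rcases le_or_gt (g (s + 1)) (g s) with h | h
    · linarith
    · exact (hasc hs h).1.le
  · have := hS (hasc hs.1 hs.2).2 (hasc hs'.1 hs'.2).2
    exact Nat.succ_injective (hπinj (mem_range.2 hs.1) (mem_range.2 hs'.1) this)

end Shift

def rank (X : Fin n → ℤ) (i : Fin n) : ℕ := #{j | X i < X j}

section Rank

variable {X : Fin n → ℤ}

theorem rank_lt_rank_of_lt {i j : Fin n} (h : X i < X j) : rank X j < rank X i := by
  refine card_lt_card ((ssubset_iff_of_subset fun k hk => ?_).2 ⟨j, ?_, ?_⟩)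
  · simp only [mem_filter, mem_univ, true_and] at hk ⊢
    exact h.trans hk
  · simp [h]
  · simp

theorem rank_lt (i : Fin n) : rank X i < n :=
  (card_lt_card (filter_ssubset.2 ⟨i, mem_univ _, lt_irrefl (X i)⟩)).trans_eq (card_fin n)

theorem rank_injective (hX : Function.Injective X) : Function.Injective (rank X) := by
  intro i j h
  by_contra hne
  rcases (hX.ne hne).lt_or_gt with hlt | hlt
  · exact (rank_lt_rank_of_lt hlt).ne' h
  · exact (rank_lt_rank_of_lt hlt).ne h

theorem rank_lt_rank_iff (hX : Function.Injective X) {i j : Fin n} :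
    rank X i < rank X j ↔ X j < X i := by
  refine ⟨fun h => lt_of_not_ge fun h' => ?_, rank_lt_rank_of_lt⟩
  rcases h'.eq_or_lt with heq | hlt
  · exact h.ne (congrArg (rank X) (hX heq))
  · exact (rank_lt_rank_of_lt hlt).not_gt h

theorem exists_rank_eq (hX : Function.Injective X) {t : ℕ} (ht : t < n) : ∃ i, rank X i = t := by
  obtain ⟨i, -, hi⟩ := surjOn_of_injOn_of_card_le (rank X) (s := univ) (t := range n)
    (fun i _ => mem_range.2 (rank_lt i)) (rank_injective hX).injOn (by simp) (mem_range.2 ht)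
  exact ⟨i, hi⟩

end Rank

open Function in
theorem eq_zero_of_rank_shift {X Y c : Fin n → ℤ} {B : ℤ} {w : ℕ} (hB : 0 ≤ B) (hw : 1 ≤ w)
    (hX : Injective X) (hY : Injective Y) (hXY : ∀ i, X i = Y i + B * c i)
    (hrank : ∀ i, (rank Y i : ℤ) = rank X i + (w + 1) * c i)
    (hS : {p : Fin n × Fin n | rank X p.2 = rank X p.1 + w ∧ X p.1 - X p.2 < B}.Subsingleton) :
    c = 0 := by
  ext i
  have : Nonempty (Fin n) := ⟨i⟩
  -- `ψ` and `φ` list the indices by decreasing `X` and by decreasing `Y`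
  set ψ := invFun (rank X)
  set φ := invFun (rank Y)
  have hψ (t : ℕ) (ht : t < n) : rank X (ψ t) = t := invFun_eq (exists_rank_eq hX ht)
  have hφ (s : ℕ) (hs : s < n) : rank Y (φ s) = s := invFun_eq (exists_rank_eq hY hs)
  have hψX (j : Fin n) : ψ (rank X j) = j := leftInverse_invFun (rank_injective hX) j
  have hφY (j : Fin n) : φ (rank Y j) = j := leftInverse_invFun (rank_injective hY) j
  have hzero := eq_zero_of_perm_shift (x := fun t => X (ψ t)) (π := fun s => rank X (φ s))
    (g := fun s => c (φ s)) hB hw ?_ ?_ ?_ ?_ ?_ ?_ (rank Y i) (rank_lt i)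
  · simpa [hφY] using hzero
  · intro t t' htt' ht'
    rcases htt'.eq_or_lt with rfl | hlt
    · exact le_rfl
    · exact ((rank_lt_rank_iff hX).1 (by rw [hψ t (by omega), hψ t' ht']; exact hlt)).le
  · intro t ht t' ht'
    have hpair (t : ℕ) (ht : t ∈ shortWindows (fun t => X (ψ t)) B w n) :
        (ψ t, ψ (t + w)) ∈ {p : Fin n × Fin n | rank X p.2 = rank X p.1 + w ∧ X p.1 - X p.2 < B} :=
      ⟨by rw [hψ _ ht.1, hψ t (by linarith [ht.1])], ht.2⟩
    have := congrArg (rank X ∘ Prod.fst) (hS (hpair t ht) (hpair t' ht'))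
    simpa [hψ t (by linarith [ht.1]), hψ t' (by linarith [ht'.1])] using this
  · exact fun s _ => mem_coe.2 (mem_range.2 (rank_lt _))
  · intro s hs s' hs' h
    have := congrArg (rank Y) (rank_injective hX h)
    rwa [hφ s (mem_range.1 hs), hφ s' (mem_range.1 hs')] at this
  · intro s hs
    linarith [hrank (φ s), hφ s hs]
  · intro s hs
    simp only [hψX]
    have := (rank_lt_rank_iff hY (i := φ s) (j := φ (s + 1))).1
      (by rw [hφ s (by omega), hφ (s + 1) hs]; omega)
    linarith [hXY (φ s), hXY (φ (s + 1))]

theorem mul_add_lt_mul_add_iff {N a b s t : ℤ} (hs : 0 ≤ s) (hs' : s < N) (ht : 0 ≤ t)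
    (ht' : t < N) : N * a + s < N * b + t ↔ a < b ∨ (a = b ∧ s < t) := by
  constructor
  · intro h
    rcases lt_trichotomy a b with hab | rfl | hab
    · exact Or.inl hab
    · exact Or.inr ⟨rfl, by linarith⟩
    · nlinarith
  · rintro (hab | ⟨rfl, hst⟩)
    · nlinarith
    · linarith

section Key

variable (lam : Fin n → ℤ)

def tieBreak (i : Fin n) : ℤ := if 0 ≤ lam i then 2 * n - 1 - i else i

def key (i : Fin n) : ℤ := 2 * n * |lam i| + tieBreak lam i

variable {lam}

theorem tieBreak_nonneg (i : Fin n) : 0 ≤ tieBreak lam i := by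
  have := i.isLt
  unfold tieBreak; split_ifs <;> omega

theorem tieBreak_lt (i : Fin n) : tieBreak lam i < 2 * n := by
  have := i.isLt
  unfold tieBreak; split_ifs <;> omega

theorem tieBreak_lt_tieBreak_iff {i j : Fin n} :
    tieBreak lam j < tieBreak lam i ↔
      (0 ≤ lam i ∧ lam j < 0) ∨ (0 ≤ lam i ∧ 0 ≤ lam j ∧ i < j) ∨
        (lam i < 0 ∧ lam j < 0 ∧ j < i) := by
  have := i.isLt
  have := j.isLt
  simp only [tieBreak, Fin.lt_def]
  split_ifs <;> omega

theorem tieBreak_injective : Function.Injective (tieBreak lam) := by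
  intro i j h
  have := i.isLt
  have := j.isLt
  simp only [tieBreak] at h
  ext
  split_ifs at h <;> omega

theorem key_lt_key_iff_prec {i j : Fin n} : key lam j < key lam i ↔ Prec lam i j := by
  rw [key, key, mul_add_lt_mul_add_iff (tieBreak_nonneg j) (tieBreak_lt j) (tieBreak_nonneg i)
    (tieBreak_lt i), tieBreak_lt_tieBreak_iff, Prec, eq_comm]

theorem key_lt_key_of_abs_lt {i j : Fin n} (h : |lam i| < |lam j|) : key lam i < key lam j :=
  (mul_add_lt_mul_add_iff (tieBreak_nonneg i) (tieBreak_lt i) (tieBreak_nonneg j)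
    (tieBreak_lt j)).2 (Or.inl h)

theorem key_injective : Function.Injective (key lam) := by
  intro i j h
  have habs : |lam i| = |lam j| := by
    by_contra hne
    rcases lt_or_gt_of_ne hne with hlt | hlt
    · exact (key_lt_key_of_abs_lt hlt).ne h
    · exact (key_lt_key_of_abs_lt hlt).ne' h
  exact tieBreak_injective (by simp only [key, habs] at h; linarith)

end Key

section Weight

variable {lam mu : Fin n → ℤ} {i : Fin n}

theorem posOf_eq_rank_key : posOf lam i = rank (key lam) i := by
  unfold posOf rank
  congr 1
  exact filter_congr fun j _ => key_lt_key_iff_prec.symm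

theorem sgn_mul_rho : sgn lam i * rho lam i = n - 1 - posOf lam i := by
  unfold rho sgn
  split_ifs <;> ring

theorem abs_rho : |rho lam i| = n - 1 - posOf lam i := by
  have : posOf lam i < n := posOf_eq_rank_key (lam := lam) ▸ rank_lt i
  unfold rho sgn
  split_ifs
  · rw [one_mul, abs_of_nonneg (by omega)]
  · rw [neg_one_mul, abs_neg, abs_of_nonneg (by omega)]

theorem abs_eq_sgn_mul : |lam i| = sgn lam i * lam i := by
  unfold sgn
  split_ifs with h
  · rw [abs_of_nonneg h, one_mul]
  · rw [abs_of_neg (not_le.1 h), neg_one_mul]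

theorem sgn_ne_zero : sgn lam i ≠ 0 := by
  unfold sgn
  split_ifs <;> norm_num

theorem tieBreak_eq_of_sgn_eq (h : sgn lam i = sgn mu i) : tieBreak lam i = tieBreak mu i := by
  unfold sgn at h
  unfold tieBreak
  split_ifs at h ⊢ <;> rfl

theorem isNbhd_of_key_sub_lt {b : ℤ} {w : ℕ} {u v : Fin n}
    (hrank : rank (key lam) v = rank (key lam) u + w) (hkey : key lam u - key lam v < 2 * n * b) :
    IsNbhd (w + 1) b lam u v := by
  have hlex : 2 * n * |lam u| + tieBreak lam u < 2 * n * (|lam v| + b) + tieBreak lam v := by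
    unfold key at hkey; linarith
  rw [mul_add_lt_mul_add_iff (tieBreak_nonneg u) (tieBreak_lt u) (tieBreak_nonneg v)
    (tieBreak_lt v)] at hlex
  refine ⟨?_, ?_, fun hb => ?_⟩
  · rw [abs_rho, abs_rho, posOf_eq_rank_key, posOf_eq_rank_key, hrank]
    push_cast
    ring
  · omega
  · have := tieBreak_lt_tieBreak_iff.1 (hlex.resolve_left (by omega)).2
    tauto

theorem subsingleton_of_nbhdCount_le_one {a b : ℤ} (h : nbhdCount a b lam ≤ 1) :
    {p : Fin n × Fin n | IsNbhd a b lam p.1 p.2}.Subsingleton :=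
  fun p hp q hq => card_le_one.1 h p (by simpa using hp) q (by simpa using hq)

end Weight

theorem stmt3_general (n : ℕ) (k r : ℤ)
    (hk2 : 2 ≤ k + 1) (hr : 1 ≤ r - 1)
    (lam mu : Fin n → ℤ)
    (hcount : nbhdCount (k + 1) (r - 1) lam ≤ 1)
    (hsg : ∀ i, sgn lam i = sgn mu i)
    (m : Fin n → ℤ)
    (heq : ∀ i, lam i = mu i + (r - 1) * m i)
    (hrho : ∀ i, rho lam i = rho mu i + (k + 1) * m i) :
    lam = mu := by
  lift k to ℕ using (by omega)
  have hc : (fun i => sgn lam i * m i) = 0 := by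
    refine eq_zero_of_rank_shift (X := key lam) (Y := key mu) (B := 2 * n * (r - 1)) (w := k)
      (by positivity) (by omega) key_injective key_injective (fun i => ?_) (fun i => ?_)
      ((subsingleton_of_nbhdCount_le_one hcount).anti fun p hp => isNbhd_of_key_sub_lt hp.1 hp.2)
    · rw [key, key, tieBreak_eq_of_sgn_eq (hsg i), abs_eq_sgn_mul, abs_eq_sgn_mul, heq i, hsg i]
      ring
    · rw [← posOf_eq_rank_key, ← posOf_eq_rank_key]
      linear_combination sgn_mul_rho (lam := mu) (i := i) - sgn_mul_rho (lam := lam) (i := i) +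
        sgn lam i * hrho i + (rho mu i) * hsg i
  funext i
  have hm : m i = 0 := (mul_eq_zero.1 (congrFun hc i)).resolve_left sgn_ne_zero
  rw [heq i, hm, mul_zero, add_zero]

/-- an element λ with at most one (k+1,r−1)-neighborhood has non-degenerate
eigenvalue under t^{k+1}q^{r−1} = 1: if σ(λ) = σ(μ) and λ − μ = (r−1)m, ρ(λ) − ρ(μ) = (k+1)m
componentwise for an integer vector m, then λ = μ. -/
theorem stmt3 (n : ℕ) (hn : 2 ≤ n) (k r : ℤ)
    (hk2 : 2 ≤ k + 1) (hkn : k + 1 ≤ (n : ℤ)) (hr : 1 ≤ r - 1)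
    (lam mu : Fin n → ℤ)
    (hcount : nbhdCount (k + 1) (r - 1) lam ≤ 1)
    (hsg : ∀ i, sgn lam i = sgn mu i)
    (m : Fin n → ℤ)
    (heq : ∀ i, lam i = mu i + (r - 1) * m i)
    (hrho : ∀ i, rho lam i = rho mu i + (k + 1) * m i) :
    lam = mu :=
  stmt3_general n k r hk2 hr lam mu hcount hsg m heq hrho

end CCnDAHA
end

section
/- Let k ≥ 1 and m ≥ 1 be integers, n = k·m, and let K be a field with q, t ∈ K^× satisfying t^{k+1}·q = 1. Then the Laurent polynomial ∏_{ℓ=1}^{k} ∏_{m(ℓ−1) < i < j ≤ mℓ} (x_i − t^{−1}x_j)(1 − t^{ℓ}·q·x_i^{−1}x_j^{−1}) in K[x_1^{±1},…,x_n^{±1}] satisfies the 1-wheel condition of type (k+1, 1). -/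
/-
Cut the wheel open at its unique step with `p = 1`: this gives distinct indices `J 0, …, J k` and
signs `σ j` with `z (J j) ^ σ j = w * t ^ j`; the signs run `1, …, 1, -1, …, -1`, and the indices
increase along the first run and decrease along the second. Blocks of `m` consecutive variables are
monotone in the index. If two consecutive indices of equal sign share a block, then `z j = t * z i`
for them and the factor `x_i - t⁻¹ x_j` vanishes. Otherwise blocks strictly increase along the first
run and strictly decrease along the second, and since `k + 1` indices meet only `k` blocks, counting
the indices below each block gives `J x` in the first run and `J y` in the second sharing the block
`ℓ = x + (k - y) + 1`; there `z_{J x} z_{J y} = t ^ (x - y) = t ^ ℓ q`, so the factor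
`1 - t ^ ℓ q x_i⁻¹ x_j⁻¹` vanishes.
-/

open scoped Classical

namespace CCnDAHA

variable {n : ℕ}




section Evaluation

variable {K : Type*} [Field K]

noncomputable def monomialChar (z : Fin n → Kˣ) : Multiplicative (Fin n →₀ ℤ) →* K where
  toFun v := ∏ i, (z i : K) ^ v.toAdd i
  map_one' := by simp
  map_mul' v w := by
    simp only [toAdd_mul, Finsupp.coe_add, Pi.add_apply, zpow_add₀ (Units.ne_zero _),
      Finset.prod_mul_distrib]

noncomputable def evalHom (z : Fin n → Kˣ) : LaurentMv K n →ₐ[K] K :=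
  AddMonoidAlgebra.lift K K (Fin n →₀ ℤ) (monomialChar z)

theorem evalAt_eq_evalHom (z : Fin n → Kˣ) (f : LaurentMv K n) :
    evalAt (fun i => (z i : K)) f = evalHom z f := by
  rw [evalHom, AddMonoidAlgebra.lift_apply, evalAt]
  rfl

theorem evalHom_single (z : Fin n → Kˣ) (v : Fin n →₀ ℤ) (c : K) :
    evalHom z (AddMonoidAlgebra.single v c) = c * ∏ i, (z i : K) ^ v i := by
  rw [evalHom, AddMonoidAlgebra.lift_single, smul_eq_mul]
  rfl

theorem prod_zpow_single (z : Fin n → Kˣ) (a : Fin n) (e : ℤ) :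
    ∏ i, (z i : K) ^ Finsupp.single a e i = (z a : K) ^ e := by
  simp [Finsupp.single_apply]

end Evaluation

section PairFactor

variable {K : Type*} [Field K]

noncomputable def pairFactor (a c : K) (i j : Fin n) : LaurentMv K n :=
  (AddMonoidAlgebra.single (Finsupp.single i 1) (1 : K)
      - AddMonoidAlgebra.single (Finsupp.single j 1) a)
    * (AddMonoidAlgebra.single 0 1
      - AddMonoidAlgebra.single (Finsupp.single i (-1) + Finsupp.single j (-1)) c)

theorem evalHom_pairFactor (z : Fin n → Kˣ) (a c : K) (i j : Fin n) :
    evalHom z (pairFactor a c i j)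
      = ((z i : K) - a * z j) * (1 - c * (z i : K)⁻¹ * (z j : K)⁻¹) := by
  simp only [pairFactor, map_mul, map_sub, evalHom_single, Finsupp.coe_add, Pi.add_apply,
    zpow_add₀ (Units.ne_zero _), Finset.prod_mul_distrib, prod_zpow_single, Finsupp.coe_zero,
    Pi.zero_apply, zpow_zero, Finset.prod_const_one, zpow_one, zpow_neg_one]
  ring

theorem evalHom_pairFactor_eq_zero_of_eq_mul (z : Fin n → Kˣ) {t : K} (c : K) {i j : Fin n}
    (h : (z j : K) = t * z i) (ht : t ≠ 0) : evalHom z (pairFactor t⁻¹ c i j) = 0 := by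
  rw [evalHom_pairFactor, h, inv_mul_cancel_left₀ ht, sub_self, zero_mul]

theorem evalHom_pairFactor_eq_zero_of_mul_eq (z : Fin n → Kˣ) (a : K) {c : K} {i j : Fin n}
    (h : (z i : K) * z j = c) : evalHom z (pairFactor a c i j) = 0 := by
  rw [evalHom_pairFactor, ← h]
  field_simp
  ring

theorem evalAt_prod_blocks_eq_zero {k m : ℕ} (z : Fin (k * m) → Kˣ)
    (F : ℕ → Fin (k * m) → Fin (k * m) → LaurentMv K (k * m)) {i j : Fin (k * m)} {b : ℕ}
    (hb : b < k) (hij : i < j) (hi : (i : ℕ) / m = b) (hj : (j : ℕ) / m = b)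
    (hF : evalHom z (F (b + 1) i j) = 0) :
    evalAt (fun i => (z i : K))
      (∏ ℓ ∈ Finset.Icc 1 k,
        ∏ p ∈ (Finset.univ : Finset (Fin (k * m) × Fin (k * m))).filter
            (fun p => m * (ℓ - 1) < (p.1 : ℕ) + 1 ∧ (p.1 : ℕ) < (p.2 : ℕ) ∧
              (p.2 : ℕ) + 1 ≤ m * ℓ),
          F ℓ p.1 p.2) = 0 := by
  have hm : 0 < m := Nat.pos_of_ne_zero fun h => (h ▸ i).elim0
  have hi' : m * b ≤ i := hi ▸ Nat.mul_div_le (i : ℕ) m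
  have hj' : (j : ℕ) < m * (b + 1) := hj ▸ Nat.lt_mul_div_succ (j : ℕ) hm
  rw [evalAt_eq_evalHom, map_prod]
  refine Finset.prod_eq_zero (i := b + 1) (Finset.mem_Icc.2 ⟨by omega, by omega⟩) ?_
  rw [map_prod]
  refine Finset.prod_eq_zero (i := (i, j)) ?_ hF
  simp only [Finset.mem_filter, Finset.mem_univ, true_and, add_tsub_cancel_right]
  exact ⟨by omega, hij, by omega⟩

end PairFactor

section Counting

open Finset

theorem card_filter_lt_add_one (a : ℕ → ℕ) (s L : ℕ) :
    #{x ∈ range s | a x < L + 1} = #{x ∈ range s | a x < L} + #{x ∈ range s | a x = L} := by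
  rw [← card_union_of_disjoint (disjoint_filter.2 fun _ _ h => h.ne), ← filter_or]
  simp only [Nat.lt_succ_iff_lt_or_eq]

theorem card_filter_eq_le_one {a : ℕ → ℕ} {s : ℕ} (ha : Set.InjOn a (Set.Iio s)) (L : ℕ) :
    #{x ∈ range s | a x = L} ≤ 1 :=
  card_le_one.2 fun x hx y hy => by
    simp only [mem_filter, mem_range] at hx hy
    exact ha hx.1 hy.1 (hx.2.trans hy.2.symm)

theorem StrictMonoOn.card_filter_lt {a : ℕ → ℕ} {s x : ℕ} (ha : StrictMonoOn a (Set.Iio s))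
    (hx : x < s) : #{x' ∈ range s | a x' < a x} = x := by
  suffices {x' ∈ range s | a x' < a x} = range x by rw [this, card_range]
  ext x'
  simp only [mem_filter, mem_range]
  exact ⟨fun h => (ha.lt_iff_lt h.1 hx).1 h.2,
    fun h => ⟨h.trans hx, (ha.lt_iff_lt (h.trans hx) hx).2 h⟩⟩

theorem exists_eq_add_of_strictMonoOn {a c : ℕ → ℕ} {s r k : ℕ}
    (ha : StrictMonoOn a (Set.Iio s)) (hc : StrictMonoOn c (Set.Iio r))
    (hak : ∀ x < s, a x < k) (hck : ∀ y < r, c y < k) (hk : k < s + r) :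
    ∃ x < s, ∃ y < r, a x = x + y ∧ c y = x + y := by
  let N : ℕ → ℕ := fun L => #{x ∈ range s | a x < L} + #{y ∈ range r | c y < L}
  have hN0 : ¬ 0 < N 0 := by simp [N]
  have hNk : k < N k := by
    simp only [N, filter_true_of_mem fun x hx => hak x (mem_range.1 hx),
      filter_true_of_mem fun y hy => hck y (mem_range.1 hy), card_range, hk]
  -- the first level at which `N` overtakes the diagonal must be hit by both sequences
  obtain ⟨ℓ, hℓ, hℓ1⟩ :=
    Nat.exists_not_and_succ_of_not_zero_of_exists (p := fun L => L < N L) hN0 ⟨k, hNk⟩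
  simp only [N, card_filter_lt_add_one] at hℓ hℓ1
  have ha1 := card_filter_eq_le_one ha.injOn ℓ
  have hc1 := card_filter_eq_le_one hc.injOn ℓ
  obtain ⟨x, hx⟩ := card_pos.1 (show 0 < #{x ∈ range s | a x = ℓ} by omega)
  obtain ⟨y, hy⟩ := card_pos.1 (show 0 < #{y ∈ range r | c y = ℓ} by omega)
  simp only [mem_filter, mem_range] at hx hy
  have hxℓ := StrictMonoOn.card_filter_lt ha hx.1
  have hyℓ := StrictMonoOn.card_filter_lt hc hy.1
  rw [hx.2] at hxℓ
  rw [hy.2] at hyℓ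
  exact ⟨x, hx.1, y, hy.1, by omega, by omega⟩

end Counting

section Chains

open Fin.NatCast

def IsAdmissibleStep (i : Fin n) (σ : ℤ) (i' : Fin n) (σ' : ℤ) : Prop :=
  (σ = 1 ∧ σ' = 1 ∧ i < i') ∨ (σ = 1 ∧ σ' = -1) ∨ (σ = -1 ∧ σ' = -1 ∧ i' < i)

namespace IsAdmissibleStep

variable {i i' : Fin n} {σ' : ℤ}

theorem lt_of_one (h : IsAdmissibleStep i 1 i' 1) : i < i' := by
  rcases h with ⟨-, -, h⟩ | ⟨-, h⟩ | ⟨h, -⟩ <;> first | exact h | omega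

theorem lt_of_neg_one (h : IsAdmissibleStep i (-1) i' (-1)) : i' < i := by
  rcases h with ⟨h, -⟩ | ⟨h, -⟩ | ⟨-, -, h⟩ <;> first | exact h | omega

theorem eq_neg_one (h : IsAdmissibleStep i (-1) i' σ') : σ' = -1 := by
  rcases h with ⟨h, -⟩ | ⟨h, -⟩ | ⟨-, h, -⟩ <;> first | exact h | omega

end IsAdmissibleStep

/-- A wheel of type `(k + 1, 1)`, cut open at its unique step with `p = 1`. -/
structure IsTChain {K : Type*} [Field K] (k : ℕ) (t : K) (z : Fin n → Kˣ) (J : ℕ → Fin n)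
    (σ : ℕ → ℤ) : Prop where
  injOn : Set.InjOn J (Set.Iic k)
  sign : ∀ j, σ j = 1 ∨ σ j = -1
  step : ∀ j < k, (z (J j) : K) ^ σ j * t = (z (J (j + 1)) : K) ^ σ (j + 1)
  admissible : ∀ j < k, IsAdmissibleStep (J j) (σ j) (J (j + 1)) (σ (j + 1))

theorem Fintype.exists_forall_ne_eq_zero_of_sum_eq_one {ι : Type*} [Fintype ι] {p : ι → ℕ}
    (h : ∑ i, p i = 1) : ∃ i₀, ∀ i ≠ i₀, p i = 0 := by
  obtain ⟨i₀, -, hi₀⟩ := Finset.exists_ne_zero_of_sum_ne_zero (by rw [h]; exact one_ne_zero)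
  refine ⟨i₀, fun i hi => ?_⟩
  have : p i + p i₀ ≤ 1 := calc
    p i + p i₀ = ∑ i' ∈ {i, i₀}, p i' := (Finset.sum_pair hi).symm
    _ ≤ ∑ i', p i' := Finset.sum_le_sum_of_subset (Finset.subset_univ _)
    _ = 1 := h
  omega

theorem finSucc_eq_add_one {k : ℕ} (x : Fin (k + 1)) : finSucc x = x + 1 := by
  ext
  simp [finSucc, Fin.val_add]

theorem IsWheel.exists_isTChain {K : Type*} [Field K] {k : ℕ} {t q : K} {z : Fin n → Kˣ}
    {idx : Fin (k + 1) → Fin n} {sg : Fin (k + 1) → ℤ} {p : Fin (k + 1) → ℕ}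
    (hw : IsWheel (k + 1) 1 t q z idx sg p) : ∃ J σ, IsTChain k t z J σ := by
  obtain ⟨hinj, hsg, hsum, hrel, hord⟩ := hw
  obtain ⟨m₀, hp⟩ := Fintype.exists_forall_ne_eq_zero_of_sum_eq_one hsum
  let e : ℕ → Fin (k + 1) := fun j => m₀ + 1 + (j : Fin (k + 1))
  have he_succ (j : ℕ) : finSucc (e j) = e (j + 1) := by
    simp only [e, finSucc_eq_add_one, Nat.cast_succ, add_assoc]
  have he_inj : Set.InjOn e (Set.Iic k) := fun a ha b hb hab => by
    have := congrArg Fin.val (add_left_cancel hab)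
    rwa [Fin.val_cast_of_lt (Nat.lt_succ_of_le ha), Fin.val_cast_of_lt (Nat.lt_succ_of_le hb)]
      at this
  have hpe (j : ℕ) (hj : j < k) : p (e j) = 0 := by
    refine hp _ fun h => ?_
    rw [show e j = m₀ + (1 + j) from add_assoc .., add_eq_left] at h
    have : (((j + 1 : ℕ)) : Fin (k + 1)) = 0 := by rwa [Nat.cast_succ, add_comm (j : Fin (k + 1))]
    have := Nat.eq_zero_of_dvd_of_lt (Fin.natCast_eq_zero.1 this) (by omega)
    omega
  refine ⟨idx ∘ e, sg ∘ e, hinj.comp_injOn he_inj, fun j => hsg _, fun j hj => ?_,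
    fun j hj => ?_⟩
  · simpa [hpe j hj, he_succ] using hrel (e j)
  · simpa [IsAdmissibleStep, he_succ] using hord (e j) (hpe j hj)

end Chains

namespace IsTChain

variable {K : Type*} [Field K] {k : ℕ} {t : K} {z : Fin n → Kˣ} {J : ℕ → Fin n} {σ : ℕ → ℤ}

theorem zpow_eq (hc : IsTChain k t z J σ) {j : ℕ} (hj : j ≤ k) :
    (z (J j) : K) ^ σ j = (z (J 0) : K) ^ σ 0 * t ^ j := by
  induction j with
  | zero => rw [pow_zero, mul_one]
  | succ j ih => rw [← hc.step j hj, ih (by omega), pow_succ, mul_assoc]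

theorem exists_sign_split (hc : IsTChain k t z J σ) :
    ∃ s ≤ k + 1, (∀ j < s, σ j = 1) ∧ ∀ j, s ≤ j → j ≤ k → σ j = -1 := by
  have hex : ∃ j, j = k + 1 ∨ σ j = -1 := ⟨k + 1, Or.inl rfl⟩
  refine ⟨Nat.find hex, Nat.find_min' hex (Or.inl rfl),
    fun j hj => (hc.sign j).resolve_right fun h => Nat.find_min hex hj (Or.inr h),
    fun j hsj hjk => ?_⟩
  induction j, hsj using Nat.le_induction with
  | base => exact (Nat.find_spec hex).resolve_left (by omega)
  | succ j hsj ih => exact (ih (by omega) ▸ hc.admissible j hjk).eq_neg_one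

theorem exists_pair_of_eq_sign (hc : IsTChain k t z J σ) (ht : t ≠ 0) (β : Fin n → ℕ) {j : ℕ}
    (hj : j < k) (hσ : σ j = σ (j + 1)) (hβ : β (J j) = β (J (j + 1))) :
    ∃ i i', i < i' ∧ β i = β i' ∧ (z i' : K) = t * z i := by
  have hstep := hc.step j hj
  have hadm := hc.admissible j hj
  rw [← hσ] at hstep hadm
  rcases hc.sign j with h | h <;> rw [h] at hstep hadm
  · rw [zpow_one, zpow_one] at hstep
    exact ⟨J j, J (j + 1), hadm.lt_of_one, hβ, by rw [← hstep, mul_comm]⟩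
  · rw [zpow_neg_one, zpow_neg_one] at hstep
    refine ⟨J (j + 1), J j, hadm.lt_of_neg_one, hβ.symm, ?_⟩
    rw [← inv_inj, mul_inv, ← hstep, mul_comm, mul_inv_cancel_right₀ ht]

theorem exists_pair_of_ne_block (hc : IsTChain k t z J σ) (ht : t ≠ 0) {β : Fin n → ℕ}
    (hβ : Monotone β) (hβk : ∀ i, β i < k)
    (hne : ∀ j < k, σ j = σ (j + 1) → β (J j) ≠ β (J (j + 1))) :
    ∃ i i', i < i' ∧ β i = β i' ∧ (z i : K) * z i' * t ^ (k - β i) = 1 := by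
  obtain ⟨s, hs, hplus, hminus⟩ := hc.exists_sign_split
  have hinc : StrictMonoOn (fun x => β (J x)) (Set.Iio s) := by
    refine strictMonoOn_of_lt_add_one Set.ordConnected_Iio fun x _ _ hx => ?_
    have hx : x + 1 < s := hx
    have h₁ := hplus x (by omega)
    have h₂ := hplus (x + 1) hx
    have hlt := (h₁ ▸ h₂ ▸ hc.admissible x (by omega)).lt_of_one
    exact (hβ hlt.le).lt_of_ne (hne x (by omega) (h₁.trans h₂.symm))
  have hdec : StrictMonoOn (fun y => β (J (k - y))) (Set.Iio (k + 1 - s)) := by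
    refine strictMonoOn_of_lt_add_one Set.ordConnected_Iio fun y _ _ hy => ?_
    have hy : y + 1 < k + 1 - s := hy
    obtain ⟨j, hj, hj'⟩ : ∃ j, k - y = j + 1 ∧ k - (y + 1) = j := ⟨k - (y + 1), by omega, rfl⟩
    simp only [hj, hj']
    have h₁ := hminus j (by omega) (by omega)
    have h₂ := hminus (j + 1) (by omega) (by omega)
    have hlt := (h₁ ▸ h₂ ▸ hc.admissible j (by omega)).lt_of_neg_one
    exact (hβ hlt.le).lt_of_ne (hne j (by omega) (h₁.trans h₂.symm)).symm
  obtain ⟨x, hx, y, hy, hβx, hβy⟩ := exists_eq_add_of_strictMonoOn hinc hdec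
    (fun _ _ => hβk _) (fun _ _ => hβk _) (by omega)
  have hzx := hc.zpow_eq (j := x) (by omega)
  have hzy := hc.zpow_eq (j := k - y) (by omega)
  rw [hplus x hx, zpow_one] at hzx
  rw [hminus (k - y) (by omega) (Nat.sub_le k y), zpow_neg_one, ← inv_inj, inv_inv] at hzy
  have hprod : (z (J x) : K) * z (J (k - y)) * t ^ (k - (x + y)) = 1 := by
    have hw : (z (J 0) : K) ^ σ 0 ≠ 0 := zpow_ne_zero _ (Units.ne_zero _)
    rw [hzx, hzy, show k - y = x + (k - (x + y)) by omega, pow_add]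
    field_simp
  have hJ : J x ≠ J (k - y) := fun h => by
    have := hc.injOn (Set.mem_Iic.2 (by omega)) (Set.mem_Iic.2 (Nat.sub_le k y)) h
    omega
  rcases hJ.lt_or_gt with h | h
  · exact ⟨_, _, h, hβx.trans hβy.symm, by rwa [hβx]⟩
  · exact ⟨_, _, h, hβy.trans hβx.symm, by rwa [hβy, mul_comm (z (J (k - y)) : K)]⟩

theorem exists_vanishing_pair (hc : IsTChain k t z J σ) (ht : t ≠ 0) {β : Fin n → ℕ}
    (hβ : Monotone β) (hβk : ∀ i, β i < k) :
    ∃ i i', i < i' ∧ β i = β i' ∧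
      ((z i' : K) = t * z i ∨ (z i : K) * z i' * t ^ (k - β i) = 1) := by
  by_cases h : ∃ j < k, σ j = σ (j + 1) ∧ β (J j) = β (J (j + 1))
  · obtain ⟨j, hj, hσ, hjβ⟩ := h
    obtain ⟨i, i', hii', hββ, hz⟩ := hc.exists_pair_of_eq_sign ht β hj hσ hjβ
    exact ⟨i, i', hii', hββ, Or.inl hz⟩
  · push Not at h
    obtain ⟨i, i', hii', hββ, hz⟩ := hc.exists_pair_of_ne_block ht hβ hβk h
    exact ⟨i, i', hii', hββ, Or.inr hz⟩

end IsTChain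

theorem stmt6_general {K : Type*} [Field K] (k m : ℕ)
    (t q : K) (hspec : t ^ (k + 1) * q = 1) :
    SatisfiesWheel (n := k * m) (k + 1) 1 t q 1
      (∏ ℓ ∈ Finset.Icc 1 k,
        ∏ p ∈ (Finset.univ : Finset (Fin (k * m) × Fin (k * m))).filter
            (fun p => m * (ℓ - 1) < (p.1 : ℕ) + 1 ∧ (p.1 : ℕ) < (p.2 : ℕ) ∧
              (p.2 : ℕ) + 1 ≤ m * ℓ),
          ((AddMonoidAlgebra.single (Finsupp.single p.1 1) (1 : K)
              - AddMonoidAlgebra.single (Finsupp.single p.2 1) t⁻¹)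
            * (AddMonoidAlgebra.single 0 1
              - AddMonoidAlgebra.single
                  (Finsupp.single p.1 (-1) + Finsupp.single p.2 (-1)) (t ^ ℓ * q)))) := by
  rintro z ⟨idx, sg, p, hw, -⟩
  have ht : t ≠ 0 := fun h => by simp [h] at hspec
  have hblock (i : Fin (k * m)) : (i : ℕ) / m < k := Nat.div_lt_of_lt_mul (mul_comm k m ▸ i.isLt)
  obtain ⟨J, σ, hc⟩ := (hw 0).exists_isTChain
  obtain ⟨i, j, hij, hb, hz⟩ :=
    hc.exists_vanishing_pair ht (fun _ _ h => Nat.div_le_div_right h) hblock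
  refine evalAt_prod_blocks_eq_zero z (fun ℓ a b => pairFactor t⁻¹ (t ^ ℓ * q) a b)
    (hblock i) hij rfl hb.symm ?_
  rcases hz with hz | hz
  · exact evalHom_pairFactor_eq_zero_of_eq_mul z _ hz ht
  · refine evalHom_pairFactor_eq_zero_of_mul_eq z _ ?_
    calc (z i : K) * z j = z i * z j * t ^ (k - i / m) * (t ^ (i / m + 1) * q) := by
          rw [mul_assoc _ (t ^ _), ← mul_assoc (t ^ _), ← pow_add,
            show k - i / m + (i / m + 1) = k + 1 by have := hblock i; omega, hspec, mul_one]
      _ = t ^ (i / m + 1) * q := by rw [hz, one_mul]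

/-- for t^{k+1}q = 1 and n = km, the factorized Laurent polynomial
∏_{ℓ=1}^{k} ∏_{m(ℓ−1)<i<j≤mℓ} (x_i − t⁻¹x_j)(1 − t^ℓ q x_i⁻¹ x_j⁻¹)
satisfies the 1-wheel condition of type (k+1,1). -/
theorem stmt6 {K : Type*} [Field K] (k m : ℕ) (hk : 1 ≤ k) (hm : 1 ≤ m)
    (t q : K) (ht : t ≠ 0) (hq : q ≠ 0) (hspec : t ^ (k + 1) * q = 1) :
    SatisfiesWheel (n := k * m) (k + 1) 1 t q 1
      (∏ ℓ ∈ Finset.Icc 1 k,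
        ∏ p ∈ (Finset.univ : Finset (Fin (k * m) × Fin (k * m))).filter
            (fun p => m * (ℓ - 1) < (p.1 : ℕ) + 1 ∧ (p.1 : ℕ) < (p.2 : ℕ) ∧
              (p.2 : ℕ) + 1 ≤ m * ℓ),
          ((AddMonoidAlgebra.single (Finsupp.single p.1 1) (1 : K)
              - AddMonoidAlgebra.single (Finsupp.single p.2 1) t⁻¹)
            * (AddMonoidAlgebra.single 0 1
              - AddMonoidAlgebra.single
                  (Finsupp.single p.1 (-1) + Finsupp.single p.2 (-1)) (t ^ ℓ * q)))) :=
  stmt6_general k m t q hspec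

end CCnDAHA
end

section
/- Let n ≥ 2. For any λ ∈ ℤ^n and any 0 ≤ i ≤ n, if ⟨s_i·λ, α_i⟩ > 0 then s_i·λ ≻ λ. -/
open scoped Classical

namespace CCnDAHA

variable {n : ℕ}




/-! For `0 < i < n` the reflection `s_i` swaps two adjacent entries and for `i = n` it flips the
sign of a negative last entry; either way `λ⁺` is unchanged and no partial sum decreases. For
`i = 0` it replaces `λ_1 ≥ 0` by `-1 - λ_1`, raising that absolute value by one. Since the `k`-th
largest element of a multiset is `≥ x` exactly when at least `k + 1` elements are, every entry of
`λ⁺` can then only grow, while their total grows by one. -/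

theorem _root_.List.Pairwise.le_getElem_iff_lt_countP {α : Type*} [LinearOrder α] {L : List α}
    (hL : L.Pairwise (· ≥ ·)) {k : ℕ} (hk : k < L.length) (x : α) :
    x ≤ L[k] ↔ k < L.countP (x ≤ ·) := by
  induction L generalizing k with
  | nil => simp at hk
  | cons a t ih =>
    rw [List.pairwise_cons] at hL
    by_cases hxa : x ≤ a
    · cases k with
      | zero => simp [hxa]
      | succ k => simp [hxa, ih hL.2 (by simpa using hk)]
    · have hsmall : ∀ b ∈ t, ¬ x ≤ b := fun b hb hxb => hxa (hxb.trans (hL.1 b hb))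
      have hzero : t.countP (x ≤ ·) = 0 := List.countP_eq_zero.2 (by simpa using hsmall)
      cases k with
      | zero => simp [hxa, hzero]
      | succ k =>
        simp only [List.getElem_cons_succ, List.countP_cons, hzero, hxa]
        simpa using hsmall _ (List.getElem_mem _)

theorem _root_.Multiset.getD_sort_reverse_le_of_countP_le {α : Type*} [LinearOrder α]
    {M M' : Multiset α} (hcard : M.card = M'.card)
    (hcount : ∀ x, M.countP (x ≤ ·) ≤ M'.countP (x ≤ ·)) (k : ℕ) (d : α) :
    ((M.sort (· ≤ ·)).reverse).getD k d ≤ ((M'.sort (· ≤ ·)).reverse).getD k d := by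
  set L := (M.sort (· ≤ ·)).reverse
  set L' := (M'.sort (· ≤ ·)).reverse
  have hsorted : ∀ N : Multiset α, ((N.sort (· ≤ ·)).reverse).Pairwise (· ≥ ·) := fun N =>
    List.pairwise_reverse.2 (Multiset.pairwise_sort N _)
  have hcountP : ∀ (N : Multiset α) x, ((N.sort (· ≤ ·)).reverse).countP (x ≤ ·) = N.countP (x ≤ ·) :=
    fun N x => by
      conv_rhs => rw [← Multiset.sort_eq N (· ≤ ·), ← Multiset.coe_reverse]
      rw [Multiset.coe_countP]
  have hlen : L.length = L'.length := by simp [L, L', hcard]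
  by_cases hk : k < L.length
  · have hk' : k < L'.length := hlen ▸ hk
    rw [List.getD_eq_getElem _ _ hk, List.getD_eq_getElem _ _ hk',
      (hsorted M').le_getElem_iff_lt_countP hk', hcountP]
    refine lt_of_lt_of_le ?_ (hcount _)
    rw [← hcountP, ← (hsorted M).le_getElem_iff_lt_countP hk]
  · rw [List.getD_eq_default _ _ (by omega), List.getD_eq_default _ _ (by omega)]

theorem _root_.List.sum_fin_getD {M : Type*} [AddCommMonoid M] {L : List M} {n : ℕ}
    (h : L.length = n) : ∑ j : Fin n, L.getD j 0 = L.sum := by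
  subst h
  rw [← Fin.sum_univ_getElem L]
  exact Finset.sum_congr rfl fun k _ => List.getD_eq_getElem L 0 k.isLt

noncomputable def absValues (lam : Fin n → ℤ) : Multiset ℤ :=
  Finset.univ.val.map fun i => |lam i|

theorem lamPlus_apply (lam : Fin n → ℤ) (j : Fin n) :
    lamPlus lam j = (((absValues lam).sort (· ≤ ·)).reverse).getD j 0 :=
  rfl

theorem lamPlus_eq_of_absValues_eq {lam mu : Fin n → ℤ} (h : absValues lam = absValues mu) :
    lamPlus lam = lamPlus mu := by
  funext j
  rw [lamPlus_apply, lamPlus_apply, h]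

theorem sum_lamPlus (lam : Fin n → ℤ) : ∑ j, lamPlus lam j = (absValues lam).sum := by
  simp only [lamPlus_apply]
  rw [List.sum_fin_getD (by simp [absValues]), List.sum_reverse, ← Multiset.sum_coe,
    Multiset.sort_eq]

theorem absValues_comp_perm (lam : Fin n → ℤ) (σ : Equiv.Perm (Fin n)) :
    absValues (lam ∘ σ) = absValues lam := by
  rw [absValues, show (fun i => |(lam ∘ σ) i|) = (fun i => |lam i|) ∘ σ from rfl,
    ← Multiset.map_map, Multiset.map_univ_val_equiv, absValues]

theorem absValues_update (lam : Fin n → ℤ) (p : Fin n) (v : ℤ) :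
    absValues (Function.update lam p v) =
      |v| ::ₘ (Finset.univ.val.erase p).map fun i => |lam i| := by
  rw [absValues, ← Multiset.cons_erase (Finset.mem_univ_val p), Multiset.map_cons,
    Function.update_self, Multiset.erase_cons_head]
  congr 1
  refine Multiset.map_congr rfl fun i hi => ?_
  rw [Function.update_of_ne ((Multiset.Nodup.mem_erase_iff Finset.univ.nodup).1 hi).1]

theorem absValues_eq_cons (lam : Fin n → ℤ) (p : Fin n) :
    absValues lam = |lam p| ::ₘ (Finset.univ.val.erase p).map fun i => |lam i| := by
  simpa using absValues_update lam p (lam p)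

theorem domLE_of_le {mu lam : Fin n → ℤ} (h : mu ≤ lam) : DomLE mu lam := fun _ =>
  Finset.sum_le_sum fun i _ => h i

theorem psum_comp_swap (lam : Fin n → ℤ) {a b : Fin n} (hab : a ≠ b) (j : Fin n) :
    psum (lam ∘ Equiv.swap a b) j =
      psum lam j + (if a ≤ j then lam b - lam a else 0) + (if b ≤ j then lam a - lam b else 0) := by
  have hdiff : ∀ i, lam (Equiv.swap a b i) =
      lam i + (if i = a then lam b - lam a else 0) + (if i = b then lam a - lam b else 0) := by
    intro i
    rcases eq_or_ne i a with rfl | hia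
    · simp [hab]
    rcases eq_or_ne i b with rfl | hib
    · simp [hab.symm]
    · simp [Equiv.swap_apply_of_ne_of_ne hia hib, hia, hib]
  simp only [psum, Function.comp_apply, hdiff, Finset.sum_add_distrib, Finset.sum_ite_eq',
    Finset.mem_filter, Finset.mem_univ, true_and]

theorem domLE_comp_swap (lam : Fin n → ℤ) {a b : Fin n} (hab : a < b) (h : lam a ≤ lam b) :
    DomLE lam (lam ∘ Equiv.swap a b) := by
  intro j
  rw [psum_comp_swap lam hab.ne]
  rcases le_or_gt b j with hbj | hjb
  · rw [if_pos (hab.le.trans hbj), if_pos hbj]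
    linarith
  · rw [if_neg (not_le.2 hjb)]
    split_ifs <;> linarith

theorem succOrd_update_of_abs_lt (lam : Fin n → ℤ) (p : Fin n) {v : ℤ} (h : |lam p| < |v|) :
    SuccOrd (Function.update lam p v) lam := by
  have hcount : ∀ x, (absValues lam).countP (x ≤ ·) ≤
      (absValues (Function.update lam p v)).countP (x ≤ ·) := by
    intro x
    rw [absValues_eq_cons lam p, absValues_update, Multiset.countP_cons, Multiset.countP_cons]
    split_ifs <;> omega
  have hle : lamPlus lam ≤ lamPlus (Function.update lam p v) := fun j => by
    rw [lamPlus_apply, lamPlus_apply]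
    exact Multiset.getD_sort_reverse_le_of_countP_le (by simp [absValues]) hcount _ _
  have hsum : ∑ j, lamPlus lam j < ∑ j, lamPlus (Function.update lam p v) j := by
    rw [sum_lamPlus, sum_lamPlus, absValues_eq_cons lam p, absValues_update,
      Multiset.sum_cons, Multiset.sum_cons]
    omega
  exact Or.inl ⟨domLE_of_le hle, fun heq => hsum.ne (by rw [heq])⟩

theorem succOrd_update_of_abs_eq_of_lt (lam : Fin n → ℤ) (p : Fin n) {v : ℤ}
    (habs : |v| = |lam p|) (hlt : lam p < v) : SuccOrd (Function.update lam p v) lam := by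
  refine Or.inr ⟨lamPlus_eq_of_absValues_eq ?_, domLE_of_le ?_, ?_⟩
  · rw [absValues_update, habs, ← absValues_eq_cons]
  · intro j
    rcases eq_or_ne j p with rfl | hjp
    · simpa using hlt.le
    · simp [hjp]
  · intro heq
    exact hlt.ne (by simpa using (congrFun heq p).symm)

theorem succOrd_comp_swap (lam : Fin n → ℤ) {a b : Fin n} (hab : a < b) (h : lam a < lam b) :
    SuccOrd (lam ∘ Equiv.swap a b) lam := by
  refine Or.inr ⟨lamPlus_eq_of_absValues_eq (absValues_comp_perm lam _),
    domLE_comp_swap lam hab h.le, fun heq => h.ne ?_⟩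
  simpa using congrFun heq b

section Reflections

variable {m : ℕ} (lam : Fin (m + 1) → ℤ)

theorem dotAct_zero_eq_update : dotAct 0 lam = Function.update lam 0 (-1 - lam 0) := by
  funext j
  rcases eq_or_ne j 0 with rfl | hj
  · simp [dotAct]
  · simp [dotAct, hj, Fin.val_eq_zero_iff]

theorem dotAct_last_eq_update :
    dotAct (m + 1) lam = Function.update lam (Fin.last m) (-lam (Fin.last m)) := by
  funext j
  rcases eq_or_ne j (Fin.last m) with rfl | hj
  · simp [dotAct]
  · have hjm : (j : ℕ) ≠ m := fun h => hj (Fin.ext h)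
    simp [dotAct, hj, hjm]

theorem dotAct_succ_eq_comp_swap (k : Fin m) :
    dotAct ((k : ℕ) + 1) lam = lam ∘ Equiv.swap k.castSucc k.succ := by
  have hk := k.isLt
  funext j
  rcases eq_or_ne j k.castSucc with rfl | hjk
  · simp [dotAct, hk, hk.ne, Fin.succ]
  rcases eq_or_ne j k.succ with rfl | hjk'
  · simp [dotAct, hk.ne]
    rfl
  · have h1 : (j : ℕ) ≠ k := fun h => hjk (Fin.ext h)
    have h2 : (j : ℕ) ≠ k + 1 := fun h => hjk' (Fin.ext h)
    simp [dotAct, Equiv.swap_apply_of_ne_of_ne hjk hjk', h1, h2, hk.ne]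

theorem pairing_zero : pairing 0 lam = -2 * lam 0 := by
  simp [pairing]

theorem pairing_last : pairing (m + 1) lam = 2 * lam (Fin.last m) := by
  simp [pairing, Fin.last]

theorem pairing_succ (k : Fin m) : pairing ((k : ℕ) + 1) lam = lam k.castSucc - lam k.succ := by
  have hk := k.isLt
  simp [pairing, hk.ne, Nat.mod_eq_of_lt (Nat.lt_succ_of_lt hk),
    Nat.mod_eq_of_lt (Nat.succ_lt_succ hk), Fin.succ]
  rfl

end Reflections

theorem stmt9_general (n : ℕ) (lam : Fin n → ℤ) (i : ℕ) (hi : i ≤ n)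
    (hpos : 0 < pairing i (dotAct i lam)) :
    SuccOrd (dotAct i lam) lam := by
  obtain _ | m := n
  · simp [pairing] at hpos
  obtain _ | k := i
  · rw [dotAct_zero_eq_update] at hpos ⊢
    rw [pairing_zero, Function.update_self] at hpos
    refine succOrd_update_of_abs_lt lam 0 ?_
    rw [abs_of_nonneg (by omega), abs_of_neg (by omega)]
    omega
  obtain hk | rfl := Nat.lt_succ_iff_lt_or_eq.1 hi
  · lift k to Fin m using hk
    rw [dotAct_succ_eq_comp_swap] at hpos ⊢
    rw [pairing_succ] at hpos
    exact succOrd_comp_swap lam Fin.castSucc_lt_succ (by simpa using hpos)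
  · rw [dotAct_last_eq_update] at hpos ⊢
    rw [pairing_last, Function.update_self] at hpos
    exact succOrd_update_of_abs_eq_of_lt lam _ (abs_neg _) (by omega)

/-- if ⟨s_i·λ, α_i⟩ > 0 then s_i·λ ≻ λ. -/
theorem stmt9 (n : ℕ) (hn : 2 ≤ n) (lam : Fin n → ℤ) (i : ℕ) (hi : i ≤ n)
    (hpos : 0 < pairing i (dotAct i lam)) :
    SuccOrd (dotAct i lam) lam :=
  stmt9_general n lam i hi hpos

end CCnDAHA
end
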